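/- arXiv:2202.05238 — 6 statements merged into one kernel-verified Lean document; each statement's English description precedes it below -/
import Mathlib

section
/- A nondecreasing sequence (s_1, s_2, ..., s_n) of n ≥ 1 nonnegative integers is the score sequence of some n-vertex tournament if and only if ∑_{i=1}^r s_i ≥ C(r,2) for all 1 ≤ r < n, and ∑_{i=1}^n s_i = C(n,2). (Landau's criterion.) -/
/-- A tournament on `n` vertices: for each pair of distinct vertices exactly one
of the two possible directed edges is present.  `dom v w` means `v` dominates `w`. -/
structure Tournament (n : ℕ) where
  dom : Fin n → Fin n → Bool
  irrefl : ∀ v, dom v v = false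
  asymm : ∀ v w : Fin n, v ≠ w → dom v w = !(dom w v)

/-- The score of a vertex: the number of vertices it dominates. -/
def Tournament.score {n : ℕ} (T : Tournament n) (v : Fin n) : ℕ :=
  (Finset.univ.filter (fun w => T.dom v w = true)).card

/-- The score sequence of a tournament: its multiset of scores, sorted nondecreasingly. -/
def Tournament.scoreList {n : ℕ} (T : Tournament n) : List ℕ :=
  Multiset.sort (Multiset.map T.score Finset.univ.val) (· ≤ ·)

/-!
Necessity: any `r` vertices play `C(r,2)` games among themselves, so their scores add up to at
least `C(r,2)`, with equality for all `n` vertices; the `r` smallest scores are the scores of some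
`r` vertices.

Sufficiency is Hall's theorem. Give vertex `v` the `s v` slots `(v, k)`, `k < s v`, and let each
pair `{v, w}` choose among the slots of `v` and `w`. A set `P` of pairs spanning the vertex set
`V` satisfies `#P ≤ C(#V, 2) ≤ ∑_{v ∈ V} s v`, the last step because for a nondecreasing `s`
the sum over any `#V` vertices is at least the sum of the `#V` smallest values. So every pair
gets a slot of its own; letting the owner of that slot win the game gives each `v` a score of at
most `s v`, and as both scores and `s` add up to `C(n,2)`, every score equals `s v`.
-/

open Finset

theorem Fin.val_le_val_of_strictMono {k n : ℕ} {g : Fin k → Fin n} (hg : StrictMono g)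
    (i : Fin k) : (i : ℕ) ≤ g i := by
  obtain ⟨i, hi⟩ := i
  induction i with
  | zero => exact Nat.zero_le _
  | succ i ih => exact (ih (by omega)).trans_lt (hg (Fin.mk_lt_mk.2 (Nat.lt_succ_self i)))

theorem Monotone.sum_filter_val_lt_card_le {M : Type*} [AddCommMonoid M] [PartialOrder M]
    [IsOrderedAddMonoid M] {n : ℕ} {s : Fin n → M} (hs : Monotone s) (S : Finset (Fin n)) :
    ∑ i with i.val < #S, s i ≤ ∑ i ∈ S, s i := by
  have hS : #S ≤ n := S.card_le_univ.trans_eq (Fintype.card_fin n)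
  have hinit : ({i | i.val < #S} : Finset (Fin n)) = univ.map (Fin.castLEEmb hS) := by
    ext i
    simp only [mem_filter, mem_univ, true_and, mem_map, Fin.castLEEmb_apply]
    exact ⟨fun h => ⟨⟨i, h⟩, rfl⟩, by rintro ⟨j, rfl⟩; exact j.2⟩
  calc ∑ i with i.val < #S, s i = ∑ j : Fin #S, s (Fin.castLE hS j) := by
        rw [hinit, sum_map]; rfl
    _ ≤ ∑ j : Fin #S, s (S.orderEmbOfFin rfl j) :=
        sum_le_sum fun j _ => hs (Fin.val_le_val_of_strictMono (S.orderEmbOfFin rfl).strictMono j)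
    _ = ∑ i ∈ S, s i := by
        conv_rhs => rw [← S.map_orderEmbOfFin_univ rfl, sum_map]
        rfl

namespace Tournament

variable {n : ℕ}

abbrev VertexPair (n : ℕ) : Type := {e : Finset (Fin n) // #e = 2}

theorem sum_card_dom_eq_choose (T : Tournament n) (A : Finset (Fin n)) :
    ∑ v ∈ A, #{w ∈ A | T.dom v w} = (#A).choose 2 := by
  have hpair : ∀ v w, (if T.dom v w then 1 else 0) + (if T.dom w v then 1 else 0) =
      if v ≠ w then 1 else 0 := by
    intro v w
    by_cases hvw : v = w
    · simp [hvw, T.irrefl]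
    · rw [T.asymm v w hvw]
      cases T.dom w v <;> simp [hvw]
  have hdouble : 2 * ∑ v ∈ A, #{w ∈ A | T.dom v w} = #A * (#A - 1) := calc
    2 * ∑ v ∈ A, #{w ∈ A | T.dom v w}
        = ∑ v ∈ A, ∑ w ∈ A, ((if T.dom v w then 1 else 0) + (if T.dom w v then 1 else 0)) := by
      simp only [card_filter, sum_add_distrib]
      rw [sum_comm (f := fun v w => if T.dom w v then 1 else 0), two_mul]
    _ = ∑ v ∈ A, (#A - 1) := sum_congr rfl fun v hv => by
      simp only [hpair]
      rw [sum_boole, filter_ne, card_erase_of_mem hv, Nat.cast_id]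
    _ = #A * (#A - 1) := by rw [sum_const, smul_eq_mul]
  rw [Nat.choose_two_right]
  omega

theorem choose_card_le_sum_score (T : Tournament n) (A : Finset (Fin n)) :
    (#A).choose 2 ≤ ∑ v ∈ A, T.score v := by
  rw [← T.sum_card_dom_eq_choose A]
  exact sum_le_sum fun v _ => card_le_card (filter_subset_filter _ (subset_univ A))

theorem sum_score (T : Tournament n) : ∑ v, T.score v = n.choose 2 := by
  have h := T.sum_card_dom_eq_choose univ
  rw [card_univ, Fintype.card_fin] at h
  exact h

theorem scoreList_eq_ofFn (T : Tournament n) (σ : Equiv.Perm (Fin n))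
    (hσ : Monotone (T.score ∘ σ)) : T.scoreList = List.ofFn (T.score ∘ σ) := by
  have hperm : Multiset.map T.score univ.val = ↑(List.ofFn (T.score ∘ σ)) := by
    rw [← Fin.univ_val_map, ← Multiset.map_map, Multiset.map_univ_val_equiv]
  rw [scoreList, hperm, Multiset.coe_sort]
  exact List.mergeSort_eq_self _ (List.sortedLE_ofFn_iff.2 hσ).pairwise

theorem choose_two_le_sum_take_scoreList (T : Tournament n) {r : ℕ} (hr : r ≤ n) :
    r.choose 2 ≤ (T.scoreList.take r).sum := by
  set σ := Tuple.sort T.score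
  set A := ({i | i.val < r} : Finset (Fin n)).map σ.toEmbedding
  rw [T.scoreList_eq_ofFn σ (Tuple.monotone_sort _), List.sum_take_ofFn]
  calc r.choose 2 = (#A).choose 2 := by rw [card_map, Fin.card_filter_val_lt, min_eq_right hr]
    _ ≤ ∑ v ∈ A, T.score v := T.choose_card_le_sum_score A
    _ = _ := by rw [sum_map]; rfl

theorem sum_scoreList (T : Tournament n) : T.scoreList.sum = n.choose 2 := by
  rw [← T.sum_score, ← Multiset.sum_coe, scoreList, Multiset.sort_eq]
  rfl

def ofWinner (win : VertexPair n → Fin n) (hwin : ∀ e, win e ∈ e.1) :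
    Tournament n where
  dom v w := if h : v = w then false else win ⟨{v, w}, card_pair h⟩ = v
  irrefl v := dif_pos rfl
  asymm v w h := by
    have hswap : (⟨{w, v}, card_pair (Ne.symm h)⟩ : VertexPair n) =
        ⟨{v, w}, card_pair h⟩ := Subtype.ext (pair_comm w v)
    rw [dif_neg h, dif_neg (Ne.symm h), hswap]
    rcases mem_insert.1 (hwin ⟨{v, w}, card_pair h⟩) with hv | hw
    · simp [hv, h]
    · simp [mem_singleton.1 hw, Ne.symm h]

theorem score_ofWinner (win : VertexPair n → Fin n) (hwin : ∀ e, win e ∈ e.1)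
    (v : Fin n) : (ofWinner win hwin).score v = #{e | win e = v} := by
  have hne : ∀ {w}, (ofWinner win hwin).dom v w = true → v ≠ w := fun hd h => by
    simp [ofWinner, h] at hd
  refine card_bij (fun w hw => ⟨{v, w}, card_pair (hne (mem_filter.1 hw).2)⟩) ?_ ?_ ?_
  · intro w hw
    have hd := (mem_filter.1 hw).2
    simp only [ofWinner, dif_neg (hne hd), decide_eq_true_eq] at hd
    simpa using hd
  · intro w₁ hw₁ w₂ _ h
    have hw₁₂ : w₁ ∈ ({v, w₂} : Finset (Fin n)) := by
      rw [← show ({v, w₁} : Finset (Fin n)) = {v, w₂} from congrArg Subtype.val h]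
      exact mem_insert_of_mem (mem_singleton_self w₁)
    exact mem_singleton.1 ((mem_insert.1 hw₁₂).resolve_left (hne (mem_filter.1 hw₁).2).symm)
  · rintro ⟨e, he⟩ hwe
    obtain ⟨a, b, hab, rfl⟩ := card_eq_two.1 he
    replace hwe := (mem_filter.1 hwe).2
    rcases mem_insert.1 (hwin ⟨{a, b}, he⟩) with ha | hb
    · rw [ha] at hwe
      subst hwe
      exact ⟨b, mem_filter.2 ⟨mem_univ b, by simp [ofWinner, ha, hab]⟩, rfl⟩
    · rw [mem_singleton.1 hb] at hwe
      subst hwe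
      have hswap : (⟨{b, a}, card_pair hab.symm⟩ : VertexPair n) =
          ⟨{a, b}, he⟩ := Subtype.ext (pair_comm b a)
      refine ⟨a, mem_filter.2 ⟨mem_univ a, ?_⟩, hswap⟩
      simp [ofWinner, hab.symm, hswap, mem_singleton.1 hb]

theorem card_le_card_biUnion_slots (s : Fin n → ℕ)
    (hsub : ∀ S : Finset (Fin n), (#S).choose 2 ≤ ∑ v ∈ S, s v) (P : Finset (VertexPair n)) :
    #P ≤ #(P.biUnion fun e => e.1.sigma fun v => range (s v)) := by
  set V := P.biUnion Subtype.val
  calc #P = #(P.map (Function.Embedding.subtype _)) := (card_map _).symm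
    _ ≤ #(V.powersetCard 2) := card_le_card fun e he => by
        obtain ⟨e, heP, rfl⟩ := mem_map.1 he
        exact mem_powersetCard.2 ⟨subset_biUnion_of_mem _ heP, e.2⟩
    _ = (#V).choose 2 := card_powersetCard 2 V
    _ ≤ ∑ v ∈ V, s v := hsub V
    _ = #(V.sigma fun v => range (s v)) := by simp [card_sigma]
    _ ≤ _ := card_le_card fun x hx => by
        obtain ⟨hv, hk⟩ := mem_sigma.1 hx
        obtain ⟨e, heP, hve⟩ := mem_biUnion.1 hv
        exact mem_biUnion.2 ⟨e, heP, mem_sigma.2 ⟨hve, hk⟩⟩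

theorem exists_score_eq (s : Fin n → ℕ)
    (hsub : ∀ S : Finset (Fin n), (#S).choose 2 ≤ ∑ v ∈ S, s v) (htot : ∑ v, s v = n.choose 2) :
    ∃ T : Tournament n, T.score = s := by
  obtain ⟨f, hf_inj, hf_mem⟩ :=
    (all_card_le_biUnion_card_iff_exists_injective _).1 (card_le_card_biUnion_slots s hsub)
  let T := ofWinner (fun e => (f e).1) fun e => (mem_sigma.1 (hf_mem e)).1
  have hle : ∀ v, T.score v ≤ s v := fun v => by
    rw [score_ofWinner]
    calc #{e | (f e).1 = v} ≤ #(range (s v)) := by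
          refine card_le_card_of_injOn (fun e => (f e).2) (fun e he => ?_) fun e₁ he₁ e₂ he₂ h => ?_
          · rw [mem_coe, mem_filter] at he
            simpa [he.2] using (mem_sigma.1 (hf_mem e)).2
          · rw [mem_coe, mem_filter] at he₁ he₂
            exact hf_inj (Sigma.ext (he₁.2.trans he₂.2.symm) (heq_of_eq h))
      _ = s v := card_range _
  refine ⟨T, funext fun v => ?_⟩
  exact (sum_eq_sum_iff_of_le fun v _ => hle v).1 (by rw [T.sum_score, htot]) v (mem_univ v)

theorem exists_score_eq_of_monotone (s : Fin n → ℕ) (hs : Monotone s)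
    (hpre : ∀ r < n, r.choose 2 ≤ ∑ i with i.val < r, s i) (htot : ∑ i, s i = n.choose 2) :
    ∃ T : Tournament n, T.score = s := by
  refine exists_score_eq s (fun S => ?_) htot
  rcases (card_le_univ S).lt_or_eq with hS | hS
  · rw [Fintype.card_fin] at hS
    exact (hpre _ hS).trans (hs.sum_filter_val_lt_card_le S)
  · rw [eq_univ_of_card S hS, card_univ, Fintype.card_fin, htot]

end Tournament

theorem landau_criterion_general (n : ℕ) (l : List ℕ) (hlen : l.length = n)
    (hsorted : l.Pairwise (· ≤ ·)) :
    (∃ T : Tournament n, T.scoreList = l) ↔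
      ((∀ r, 1 ≤ r → r < n → r.choose 2 ≤ (l.take r).sum) ∧ l.sum = n.choose 2) := by
  constructor
  · rintro ⟨T, rfl⟩
    exact ⟨fun r _ hr => T.choose_two_le_sum_take_scoreList hr.le, T.sum_scoreList⟩
  · rintro ⟨hpre, htot⟩
    obtain ⟨s, rfl⟩ : ∃ s : Fin n → ℕ, List.ofFn s = l :=
      ⟨fun i => l[i.cast hlen.symm], List.ext_getElem (by simp [hlen]) (by simp)⟩
    have hs : Monotone s := List.sortedLE_ofFn_iff.1 hsorted.sortedLE
    rw [List.sum_ofFn] at htot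
    have hpre' : ∀ r < n, r.choose 2 ≤ ∑ i with i.val < r, s i := by
      intro r hr
      rw [← List.sum_take_ofFn]
      rcases Nat.eq_zero_or_pos r with rfl | hr₀
      · simp
      · exact hpre r hr₀ hr
    obtain ⟨T, rfl⟩ := Tournament.exists_score_eq_of_monotone s hs hpre' htot
    exact ⟨T, T.scoreList_eq_ofFn (Equiv.refl _) hs⟩

/-- **Landau's criterion.** A nondecreasing sequence of `n ≥ 1` nonnegative integers is the
score sequence of some `n`-vertex tournament iff its partial sums satisfy
`∑_{i=1}^r s_i ≥ C(r,2)` for all `1 ≤ r < n` and its total sum is `C(n,2)`. -/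
theorem landau_criterion (n : ℕ) (hn : 1 ≤ n) (l : List ℕ) (hlen : l.length = n)
    (hsorted : l.Pairwise (· ≤ ·)) :
    (∃ T : Tournament n, T.scoreList = l) ↔
      ((∀ r, 1 ≤ r → r < n → r.choose 2 ≤ (l.take r).sum) ∧ l.sum = n.choose 2) :=
  landau_criterion_general n l hlen hsorted
end

section
/- For every m ≥ 1, the number SCS(2m) of distinct self-complementary score sequences of length 2m satisfies SCS(2m) = ∑_{T=C(m,2)}^{m(m-1)} ∑_{E=⌈T/m⌉}^{m-1} F_m[T, E]. -/
/-
A self-complementary sequence of length `2m` is determined by its first half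
`l = (s_1, …, s_m)`: the second half is `(2m-1-s_m, …, 2m-1-s_1)`. Landau's conditions for the
whole sequence reduce to those for `l` together with `s_m ≤ m - 1`: monotonicity across the
middle says exactly `s_m ≤ 2m-1-s_m`, and for `r = m + j` the partial sum is
`s_1 + ⋯ + s_{m-j} + j(2m-1)` while `C(m+j, 2) = C(m-j, 2) + j(2m-1)`, so the condition at
`m + j` is the condition at `m - j`. Sorting these halves by their sum `T` and last term `E`
gives the double sum: `C(m,2) ≤ T ≤ mE` and `E ≤ m - 1`.
-/

/-- A score sequence of length `n`: nondecreasing, partial sums `≥ C(r,2)` for `1 ≤ r < n`,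
and total sum `C(n,2)`. -/
def IsScoreSeq (l : List ℕ) : Prop :=
  l.Pairwise (· ≤ ·) ∧
  (∀ r, 1 ≤ r → r < l.length → r.choose 2 ≤ (l.take r).sum) ∧
  l.sum = l.length.choose 2

/-- A sequence of length `n` is self-complementary if `s_{n+1-i} = n-1-s_i`
for all `1 ≤ i ≤ ⌊n/2⌋` (here `l.getD (i-1) 0` is the `i`-th term `s_i`). -/
def IsSelfCompl (l : List ℕ) : Prop :=
  ∀ i, 1 ≤ i → i ≤ l.length / 2 →
    ((l.getD (l.length - i) 0 : ℤ)) = (l.length : ℤ) - 1 - (l.getD (i - 1) 0 : ℤ)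

/-- `F n T E` is the number of nondecreasing sequences `(s_1 ≤ ⋯ ≤ s_n)` of nonnegative
integers with `∑_{i=1}^r s_i ≥ C(r,2)` for all `1 ≤ r < n`, total sum `T`, and last term `E`. -/
noncomputable def F (n T E : ℕ) : ℕ :=
  {l : List ℕ | l.length = n ∧ l.Pairwise (· ≤ ·) ∧
    (∀ r, 1 ≤ r → r < n → r.choose 2 ≤ (l.take r).sum) ∧
    l.sum = T ∧ l.getLast? = some E}.ncard

/-- `SCS n` is the number of distinct self-complementary score sequences of length `n`. -/
noncomputable def SCS (n : ℕ) : ℕ :=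
  {l : List ℕ | l.length = n ∧ IsScoreSeq l ∧ IsSelfCompl l}.ncard

def complRev (n : ℕ) (l : List ℕ) : List ℕ := (l.map (n - 1 - ·)).reverse

section complRev

variable (n : ℕ) (l : List ℕ)

@[simp]
lemma length_complRev : (complRev n l).length = l.length := by simp [complRev]

lemma mem_complRev {b : ℕ} : b ∈ complRev n l ↔ ∃ a ∈ l, n - 1 - a = b := by simp [complRev]

lemma getElem_complRev {k : ℕ} (hk : k < (complRev n l).length) :
    (complRev n l)[k] = n - 1 - l[l.length - 1 - k]'(by simp at hk; omega) := by
  simp [complRev, List.getElem_reverse]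

lemma take_complRev (j : ℕ) : (complRev n l).take j = complRev n (l.drop (l.length - j)) := by
  rw [complRev, complRev, List.take_reverse, List.length_map, List.map_drop]

variable {n l}

lemma pairwise_complRev (h : l.Pairwise (· ≤ ·)) : (complRev n l).Pairwise (· ≤ ·) := by
  rw [complRev, List.pairwise_reverse]
  exact h.map _ fun a b hab => Nat.sub_le_sub_left hab _

lemma sum_complRev_add_sum (h : ∀ x ∈ l, x ≤ n - 1) :
    (complRev n l).sum + l.sum = l.length * (n - 1) := by
  rw [complRev, List.sum_reverse]
  induction l with
  | nil => simp
  | cons a l ih =>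
    simp only [List.forall_mem_cons] at h
    simp only [List.map_cons, List.sum_cons, List.length_cons, add_one_mul, ← ih h.2]
    omega

lemma sum_take_length_add_complRev {j : ℕ} (hj : j ≤ l.length) (h : ∀ x ∈ l, x ≤ n - 1) :
    ((l ++ complRev n l).take (l.length + j)).sum = (l.take (l.length - j)).sum + j * (n - 1) := by
  have hdrop := sum_complRev_add_sum (n := n) (l := l.drop (l.length - j))
    fun x hx => h x (List.mem_of_mem_drop hx)
  rw [List.length_drop, Nat.sub_sub_self hj] at hdrop
  rw [List.take_length_add_append, List.sum_append, take_complRev]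
  have := List.sum_take_add_sum_drop l (l.length - j)
  omega

lemma append_complRev_injective : Function.Injective fun l => l ++ complRev n l := by
  intro l₁ l₂ h
  have hlen : l₁.length = l₂.length := by simpa [← two_mul] using congrArg List.length h
  simpa [hlen] using congrArg (List.take l₁.length) h

end complRev

lemma add_choose_two_of_le {m j : ℕ} (hj : j ≤ m) :
    (m + j).choose 2 = (m - j).choose 2 + j * (2 * m - 1) := by
  have succ_choose_two (k : ℕ) : (k + 1).choose 2 = k.choose 2 + k := by
    rw [Nat.choose_succ_succ', Nat.choose_one_right, add_comm]
  induction j with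
  | zero => simp
  | succ j ih =>
    have hm : m - j = m - (j + 1) + 1 := by omega
    have := ih (by omega)
    rw [hm, succ_choose_two] at this
    rw [← add_assoc, succ_choose_two, this, add_one_mul]
    omega

structure IsScoreHalf (m : ℕ) (l : List ℕ) : Prop where
  length_eq : l.length = m
  sorted : l.Pairwise (· ≤ ·)
  choose_two_le_sum_take : ∀ r, 1 ≤ r → r ≤ m → r.choose 2 ≤ (l.take r).sum
  le_pred : ∀ x ∈ l, x ≤ m - 1

section

variable {m : ℕ} {l : List ℕ}

lemma IsScoreHalf.isScoreSeq_append (h : IsScoreHalf m l) :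
    IsScoreSeq (l ++ complRev (2 * m) l) := by
  obtain ⟨hlen, hsort, hsum, hle⟩ := h
  have hsum_take {j : ℕ} (hj : j ≤ m) :
      ((l ++ complRev (2 * m) l).take (m + j)).sum = (l.take (m - j)).sum + j * (2 * m - 1) :=
    hlen ▸ sum_take_length_add_complRev (hlen ▸ hj) fun x hx => (hle x hx).trans (by omega)
  refine ⟨?_, fun r hr₁ hr₂ => ?_, ?_⟩
  · refine List.pairwise_append.2 ⟨hsort, pairwise_complRev hsort, fun a ha b hb => ?_⟩
    obtain ⟨c, hc, rfl⟩ := (mem_complRev _ _).1 hb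
    have := hle a ha
    have := hle c hc
    omega
  · simp only [List.length_append, length_complRev, hlen] at hr₂
    rcases le_or_gt r m with hrm | hrm
    · rw [List.take_append_of_le_length (hlen ▸ hrm)]
      exact hsum r hr₁ hrm
    · obtain ⟨j, rfl⟩ : ∃ j, r = m + j := ⟨r - m, by omega⟩
      rw [hsum_take (by omega), add_choose_two_of_le (by omega)]
      have := hsum (m - j) (by omega) (by omega)
      omega
  · have hL : (l ++ complRev (2 * m) l).length = m + m := by simp [hlen]
    rw [hL, ← List.take_of_length_le hL.le, hsum_take le_rfl, add_choose_two_of_le le_rfl]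
    simp

lemma isSelfCompl_iff_of_length {L : List ℕ} (hL : L.length = 2 * m) :
    IsSelfCompl L ↔ ∀ k < m, L.getD (2 * m - 1 - k) 0 + L.getD k 0 = 2 * m - 1 := by
  simp only [IsSelfCompl, hL]
  constructor
  · intro h k hk
    have := h (k + 1) (by omega) (by omega)
    rw [show 2 * m - (k + 1) = 2 * m - 1 - k by omega, Nat.add_sub_cancel] at this
    omega
  · intro h i hi₁ hi₂
    have := h (i - 1) (by omega)
    rw [show 2 * m - 1 - (i - 1) = 2 * m - i by omega] at this
    omega

lemma isSelfCompl_append_complRev (hlen : l.length = m) (hle : ∀ x ∈ l, x ≤ 2 * m - 1) :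
    IsSelfCompl (l ++ complRev (2 * m) l) := by
  have hL : (l ++ complRev (2 * m) l).length = 2 * m := by simp [hlen]; omega
  refine (isSelfCompl_iff_of_length hL).2 fun k hk => ?_
  rw [List.getD_append_right _ _ _ (2 * m - 1 - k) (by omega), List.getD_append _ _ _ k (by omega),
    List.getD_eq_getElem _ _ (by simp; omega), getElem_complRev,
    List.getD_eq_getElem _ _ (by omega)]
  have hidx : l.length - 1 - (2 * m - 1 - k - l.length) = k := by omega
  have := hle l[k] (List.getElem_mem _)
  simp only [hidx]
  omega

lemma IsSelfCompl.eq_take_append_complRev {L : List ℕ} (hL : L.length = 2 * m)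
    (h : IsSelfCompl L) : L = L.take m ++ complRev (2 * m) (L.take m) := by
  rw [isSelfCompl_iff_of_length hL] at h
  refine List.ext_getElem (by simp [hL]; omega) fun k hk _ => ?_
  rcases lt_or_ge k m with hkm | hkm
  · rw [List.getElem_append_left (by simp; omega), List.getElem_take]
  · rw [List.getElem_append_right (by simp; omega), getElem_complRev, List.getElem_take]
    have := h (2 * m - 1 - k) (by omega)
    rw [show 2 * m - 1 - (2 * m - 1 - k) = k by omega, List.getD_eq_getElem _ _ hk,
      List.getD_eq_getElem _ _ (by omega)] at this
    have hidx : (L.take m).length - 1 - (k - (L.take m).length) = 2 * m - 1 - k := by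
      simp; omega
    simp only [hidx]
    omega

lemma IsScoreSeq.isScoreHalf_take {L : List ℕ} (hL : L.length = 2 * m) (hs : IsScoreSeq L)
    (hc : IsSelfCompl L) : IsScoreHalf m (L.take m) where
  length_eq := by simp [hL]; omega
  sorted := hs.1.sublist (List.take_sublist m L)
  choose_two_le_sum_take r hr₁ hr₂ := by
    rw [List.take_take, min_eq_left hr₂]
    exact hs.2.1 r hr₁ (by omega)
  le_pred x hx := by
    have hsort := hs.1
    rw [hc.eq_take_append_complRev hL, List.pairwise_append] at hsort
    have := hsort.2.2 x hx (2 * m - 1 - x) ((mem_complRev _ _).2 ⟨x, hx, rfl⟩)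
    omega

end

lemma setOf_isSelfCompl_eq_image (m : ℕ) :
    {L | L.length = 2 * m ∧ IsScoreSeq L ∧ IsSelfCompl L} =
      (fun l => l ++ complRev (2 * m) l) '' {l | IsScoreHalf m l} := by
  ext L
  constructor
  · rintro ⟨hL, hs, hc⟩
    exact ⟨L.take m, hs.isScoreHalf_take hL hc, (hc.eq_take_append_complRev hL).symm⟩
  · rintro ⟨l, h, rfl⟩
    refine ⟨by simp [h.length_eq]; omega, h.isScoreSeq_append, ?_⟩
    exact isSelfCompl_append_complRev h.length_eq fun x hx => (h.le_pred x hx).trans (by omega)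

lemma SCS_two_mul (m : ℕ) : SCS (2 * m) = {l | IsScoreHalf m l}.ncard := by
  rw [SCS, setOf_isSelfCompl_eq_image, Set.ncard_image_of_injective _ append_complRev_injective]

lemma finite_setOf_isScoreHalf (m : ℕ) : {l | IsScoreHalf m l}.Finite := by
  refine ((List.finite_length_eq (Fin m) m).image (List.map Fin.val)).subset fun l h => ?_
  have hlt (x) (hx : x ∈ l) : x < m := by
    have := h.le_pred x hx
    have := List.length_pos_of_mem hx
    have := h.length_eq
    omega
  exact ⟨l.attach.map fun x => ⟨x.1, hlt x.1 x.2⟩, by simp [h.length_eq], by simp⟩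

def fSet (n T E : ℕ) : Set (List ℕ) :=
  {l | l.length = n ∧ l.Pairwise (· ≤ ·) ∧
    (∀ r, 1 ≤ r → r < n → r.choose 2 ≤ (l.take r).sum) ∧ l.sum = T ∧ l.getLast? = some E}

lemma F_eq_ncard_fSet (n T E : ℕ) : F n T E = (fSet n T E).ncard := rfl

def sumLastRange (m : ℕ) : Finset (Σ _ : ℕ, ℕ) :=
  (Finset.Icc (m.choose 2) (m * (m - 1))).sigma fun T => Finset.Icc ((T + m - 1) / m) (m - 1)

lemma setOf_isScoreHalf_eq_biUnion {m : ℕ} (hm : 1 ≤ m) :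
    {l | IsScoreHalf m l} = ⋃ p ∈ (sumLastRange m : Set (Σ _ : ℕ, ℕ)), fSet m p.1 p.2 := by
  ext l
  simp only [Set.mem_ofPred_eq, Set.mem_iUnion, Finset.mem_coe, sumLastRange, Finset.mem_sigma,
    Finset.mem_Icc, exists_prop]
  constructor
  · rintro ⟨hlen, hsort, hsum, hle⟩
    have hne : l ≠ [] := List.ne_nil_of_length_pos (by omega)
    have hmax : l.sum ≤ m * l.getLast hne := by
      simpa [hlen] using List.sum_le_card_nsmul l _ fun x hx => hsort.rel_getLast hx
    have hlast := hle _ (List.getLast_mem hne)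
    refine ⟨⟨l.sum, l.getLast hne⟩, ⟨⟨?_, ?_⟩, ?_, hlast⟩, hlen, hsort,
      fun r hr₁ hr₂ => hsum r hr₁ hr₂.le, rfl, List.getLast?_eq_some_getLast hne⟩
    · simpa [List.take_of_length_le hlen.le] using hsum m hm le_rfl
    · exact hmax.trans (Nat.mul_le_mul_left m hlast)
    · rw [Nat.div_le_iff_le_mul_add_pred (by omega)]
      dsimp only
      omega
  · rintro ⟨⟨T, E⟩, ⟨⟨hT, -⟩, -, hE⟩, hlen, hsort, hsum, rfl, hlast⟩
    dsimp only at hT hE hlast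
    have hne : l ≠ [] := List.ne_nil_of_length_pos (by omega)
    have hlastE := (List.getLast_eq_iff_getLast?_eq_some hne).2 hlast
    refine ⟨hlen, hsort, fun r hr₁ hr₂ => ?_,
      fun x hx => (hsort.rel_getLast hx).trans (hlastE.trans_le hE)⟩
    rcases hr₂.lt_or_eq with hr | rfl
    · exact hsum r hr₁ hr
    · rwa [List.take_of_length_le hlen.le]

lemma ncard_setOf_isScoreHalf {m : ℕ} (hm : 1 ≤ m) :
    {l | IsScoreHalf m l}.ncard = ∑ p ∈ sumLastRange m, F m p.1 p.2 := by
  rw [setOf_isScoreHalf_eq_biUnion hm, Set.Finite.ncard_biUnion (Finset.finite_toSet _),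
    finsum_mem_coe_finset]
  · simp only [F_eq_ncard_fSet]
  · intro p hp
    refine (finite_setOf_isScoreHalf m).subset ?_
    rw [setOf_isScoreHalf_eq_biUnion hm]
    exact Set.subset_biUnion_of_mem (u := fun p : Σ _ : ℕ, ℕ => fSet m p.1 p.2) hp
  · intro p _ q _ hpq
    refine Set.disjoint_left.2 fun l hp hq => hpq ?_
    exact Sigma.ext (hp.2.2.2.1.symm.trans hq.2.2.2.1)
      (heq_of_eq (Option.some_injective _ (hp.2.2.2.2.symm.trans hq.2.2.2.2)))

/-- `SCS(2m) = ∑_{T=C(m,2)}^{m(m-1)} ∑_{E=⌈T/m⌉}^{m-1} F_m[T,E]` for `m ≥ 1`. -/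
theorem SCS_even (m : ℕ) (hm : 1 ≤ m) :
    SCS (2 * m) =
      ∑ T ∈ Finset.Icc (m.choose 2) (m * (m - 1)),
        ∑ E ∈ Finset.Icc ((T + m - 1) / m) (m - 1), F m T E := by
  rw [SCS_two_mul, ncard_setOf_isScoreHalf hm, sumLastRange, Finset.sum_sigma]
end

section
/- For every m ≥ 1, the number SCS(2m+1) of distinct self-complementary score sequences of length 2m+1 satisfies SCS(2m+1) = ∑_{T=C(m,2)}^{m^2} ∑_{E=⌈T/m⌉}^{m} F_m[T, E]. -/
/-!
A self-complementary score sequence `s` of odd length `2m+1` is determined by its first half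
`h = (s_1, …, s_m)`: complementation pairs `s_{2m+2-i}` with `2m - s_i`, and then the total
`C(2m+1, 2) = 2m·m + m` forces the middle term to be `m`. Conversely every nondecreasing `h` with
entries at most `m` and Landau bounds `∑_{i ≤ r} h_i ≥ C(r, 2)` for `r ≤ m` extends in this way to a
score sequence, because the prefix of length `m+1+k` of the extension has sum
`∑_{i ≤ m-k} h_i + m + 2mk ≥ C(m-k, 2) + m + 2mk = C(m+1+k, 2)`. Sorting the halves by their total
`T` and last term `E` gives the double sum: `⌈T/m⌉ ≤ E` holds for every nondecreasing half, and
`E ≤ m` bounds all of its entries.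
-/

theorem Nat.choose_two_add_one_add {m k : ℕ} (hk : k ≤ m) :
    (m + 1 + k).choose 2 = (m - k).choose 2 + m + 2 * m * k := by
  obtain ⟨j, rfl⟩ := Nat.exists_eq_add_of_le' hk
  rw [Nat.add_sub_cancel, ← Nat.cast_inj (R := ℚ)]
  push_cast [Nat.cast_choose_two]
  ring

theorem List.sum_map_sub_add_sum {l : List ℕ} {c : ℕ} (hl : ∀ x ∈ l, x ≤ c) :
    (l.map (c - ·)).sum + l.sum = c * l.length :=
  calc _ = (l.map fun x => c - x + x).sum := by rw [List.sum_map_add, List.map_id']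
    _ = (l.map fun _ => c).sum := by
      rw [List.map_congr_left fun x hx => Nat.sub_add_cancel (hl x hx)]
    _ = c * l.length := by simp [mul_comm]

theorem List.le_of_pairwise_of_getLast? {l : List ℕ} {E : ℕ} (hl : l.Pairwise (· ≤ ·))
    (hE : l.getLast? = some E) : ∀ x ∈ l, x ≤ E := by
  obtain ⟨l', rfl⟩ := List.getLast?_eq_some_iff.mp hE
  intro x hx
  rcases List.mem_append.mp hx with hx | hx
  · exact (List.pairwise_append.mp hl).2.2 x hx E (List.mem_singleton_self E)
  · exact (List.mem_singleton.mp hx).le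

theorem List.finite_setOf_length_eq_forall_le (n c : ℕ) :
    {l : List ℕ | l.length = n ∧ ∀ x ∈ l, x ≤ c}.Finite := by
  refine ((List.finite_length_eq (Fin (c + 1)) n).image (List.map Fin.val)).subset ?_
  rintro l ⟨hlen, hle⟩
  refine ⟨l.pmap (fun x hx => (⟨x, Nat.lt_succ_of_le hx⟩ : Fin (c + 1))) hle, ?_, ?_⟩
  · simp [hlen]
  · simp [List.map_pmap]

theorem Set.ncard_biUnion_finset {ι α : Type*} {s : Finset ι} {f : ι → Set α}
    (hf : ∀ i ∈ s, (f i).Finite) (hd : (s : Set ι).PairwiseDisjoint f) :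
    (⋃ i ∈ s, f i).ncard = ∑ i ∈ s, (f i).ncard := by
  rw [← finsum_mem_coe_finset, ← s.finite_toSet.ncard_biUnion hf hd]
  simp

def mirrorExtend (m : ℕ) (h : List ℕ) : List ℕ :=
  h ++ m :: (h.map (2 * m - ·)).reverse

structure IsHalfScoreSeq (m : ℕ) (h : List ℕ) : Prop where
  length_eq : h.length = m
  pairwise_le : h.Pairwise (· ≤ ·)
  choose_le_sum_take : ∀ r, 1 ≤ r → r < m → r.choose 2 ≤ (h.take r).sum
  choose_le_sum : m.choose 2 ≤ h.sum
  le_of_mem : ∀ x ∈ h, x ≤ m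

section mirrorExtend

variable {m : ℕ} {h : List ℕ}

theorem length_mirrorExtend (hlen : h.length = m) : (mirrorExtend m h).length = 2 * m + 1 := by
  simp [mirrorExtend, hlen]
  omega

theorem mirrorExtend_injective (m : ℕ) : Function.Injective (mirrorExtend m) := by
  intro a b hab
  have hlen : a.length = b.length := by
    have := congrArg List.length hab
    simp [mirrorExtend] at this
    omega
  simpa [mirrorExtend, hlen] using congrArg (List.take b.length) hab

theorem sum_take_mirrorExtend (hlen : h.length = m) (hle : ∀ x ∈ h, x ≤ 2 * m) {k : ℕ}
    (hk : k ≤ m) :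
    ((mirrorExtend m h).take (m + 1 + k)).sum = (h.take (m - k)).sum + m + 2 * m * k := by
  have htake : (mirrorExtend m h).take (m + 1 + k) =
      h ++ m :: ((h.drop (m - k)).map (2 * m - ·)).reverse := by
    rw [mirrorExtend, List.take_append, List.take_of_length_le (by omega),
      show m + 1 + k - h.length = k + 1 by omega, List.take_succ_cons, List.take_reverse,
      List.length_map, hlen, List.map_drop]
  have hcompl := List.sum_map_sub_add_sum (l := h.drop (m - k)) fun x hx =>
    hle x (List.mem_of_mem_drop hx)
  rw [List.length_drop, hlen, Nat.sub_sub_self hk] at hcompl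
  rw [htake, List.sum_append, List.sum_cons, List.sum_reverse,
    ← List.sum_take_add_sum_drop h (m - k)]
  omega

theorem isSelfCompl_mirrorExtend (hlen : h.length = m) (hle : ∀ x ∈ h, x ≤ 2 * m) :
    IsSelfCompl (mirrorExtend m h) := by
  intro i hi hi'
  rw [length_mirrorExtend hlen] at hi' ⊢
  have hih : i - 1 < h.length := by omega
  have hfront : (mirrorExtend m h).getD (i - 1) 0 = h[i - 1] := by
    rw [mirrorExtend, List.getD_append _ _ _ _ hih, List.getD_eq_getElem _ _ hih]
  have hback : (mirrorExtend m h).getD (2 * m + 1 - i) 0 = 2 * m - h[i - 1] := by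
    rw [mirrorExtend, List.getD_append_right _ _ _ _ (by omega),
      show 2 * m + 1 - i - h.length = m - i + 1 by omega, List.getD_cons_succ,
      List.getD_eq_getElem _ _ (by simp; omega)]
    simp only [List.getElem_reverse, List.getElem_map, List.length_map]
    congr 2
    omega
  rw [hfront, hback]
  push_cast [Nat.cast_sub (hle _ (List.getElem_mem _))]
  ring

theorem IsHalfScoreSeq.choose_le_sum_take_of_le (hh : IsHalfScoreSeq m h) {r : ℕ} (hr : r ≤ m) :
    r.choose 2 ≤ (h.take r).sum := by
  rcases hr.lt_or_eq with hr | rfl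
  · rcases Nat.eq_zero_or_pos r with rfl | hr0
    · simp
    · exact hh.choose_le_sum_take r hr0 hr
  · rw [List.take_of_length_le hh.length_eq.le]
    exact hh.choose_le_sum

theorem IsHalfScoreSeq.le_two_mul (hh : IsHalfScoreSeq m h) : ∀ x ∈ h, x ≤ 2 * m :=
  fun x hx => (hh.le_of_mem x hx).trans (by omega)

theorem IsHalfScoreSeq.choose_le_sum_take_mirrorExtend (hh : IsHalfScoreSeq m h) {r : ℕ}
    (hr : r ≤ 2 * m + 1) : r.choose 2 ≤ ((mirrorExtend m h).take r).sum := by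
  rcases le_or_gt r m with hrm | hrm
  · rw [mirrorExtend, List.take_append_of_le_length (by rw [hh.length_eq]; exact hrm)]
    exact hh.choose_le_sum_take_of_le hrm
  · obtain ⟨k, rfl⟩ : ∃ k, r = m + 1 + k := ⟨r - m - 1, by omega⟩
    have hk : k ≤ m := by omega
    rw [sum_take_mirrorExtend hh.length_eq hh.le_two_mul hk, Nat.choose_two_add_one_add hk]
    have := hh.choose_le_sum_take_of_le (Nat.sub_le m k)
    omega

theorem IsHalfScoreSeq.sum_mirrorExtend (hh : IsHalfScoreSeq m h) :
    (mirrorExtend m h).sum = (2 * m + 1).choose 2 := by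
  have := sum_take_mirrorExtend hh.length_eq hh.le_two_mul le_rfl
  rw [show m + 1 + m = 2 * m + 1 by omega,
    List.take_of_length_le (length_mirrorExtend hh.length_eq).le, Nat.sub_self] at this
  rw [this, show 2 * m + 1 = m + 1 + m by omega, Nat.choose_two_add_one_add le_rfl, Nat.sub_self]
  simp

theorem IsHalfScoreSeq.isScoreSeq_mirrorExtend (hh : IsHalfScoreSeq m h) :
    IsScoreSeq (mirrorExtend m h) := by
  rw [IsScoreSeq, length_mirrorExtend hh.length_eq]
  refine ⟨?_, fun r _ hr => hh.choose_le_sum_take_mirrorExtend hr.le, hh.sum_mirrorExtend⟩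
  have hmirror : ∀ y ∈ (h.map (2 * m - ·)).reverse, m ≤ y := by
    simp only [List.mem_reverse, List.mem_map]
    rintro _ ⟨x, hx, rfl⟩
    have := hh.le_of_mem x hx
    omega
  rw [mirrorExtend, List.pairwise_append, List.pairwise_cons, List.pairwise_reverse,
    List.pairwise_map]
  refine ⟨hh.pairwise_le, ⟨hmirror, hh.pairwise_le.imp fun hab => Nat.sub_le_sub_left hab _⟩,
    fun x hx y hy => ?_⟩
  rcases List.mem_cons.mp hy with rfl | hy
  · exact hh.le_of_mem x hx
  · exact (hh.le_of_mem x hx).trans (hmirror y hy)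

theorem isHalfScoreSeq_of_isScoreSeq_mirrorExtend (hm : 1 ≤ m) (hlen : h.length = m)
    (hs : IsScoreSeq (mirrorExtend m h)) : IsHalfScoreSeq m h := by
  obtain ⟨hsorted, hprefix, -⟩ := hs
  rw [length_mirrorExtend hlen] at hprefix
  have htake : ∀ r ≤ m, (mirrorExtend m h).take r = h.take r := fun r hr =>
    List.take_append_of_le_length (by omega)
  rw [mirrorExtend, List.pairwise_append] at hsorted
  refine ⟨hlen, hsorted.1, fun r hr₁ hr => ?_, ?_,
    fun x hx => hsorted.2.2 x hx m List.mem_cons_self⟩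
  · rw [← htake r hr.le]
    exact hprefix r hr₁ (by omega)
  · rw [← List.take_of_length_le hlen.le, ← htake m le_rfl]
    exact hprefix m hm (by omega)

end mirrorExtend

section IsSelfCompl

variable {m : ℕ} {l : List ℕ}

theorem IsSelfCompl.getElem_add_getElem (hc : IsSelfCompl l) (hl : l.length = 2 * m + 1)
    {j : ℕ} (hj : j < m) : l[2 * m - j] + l[j] = 2 * m := by
  have := hc (j + 1) (by omega) (by rw [hl]; omega)
  rw [hl, show 2 * m + 1 - (j + 1) = 2 * m - j by omega, Nat.add_sub_cancel,
    List.getD_eq_getElem _ _ (by omega), List.getD_eq_getElem _ _ (by omega)] at this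
  push_cast at this
  omega

theorem IsSelfCompl.drop_eq (hc : IsSelfCompl l) (hl : l.length = 2 * m + 1) :
    l.drop (m + 1) = ((l.take m).map (2 * m - ·)).reverse := by
  apply List.ext_getElem
  · simp [hl]
    omega
  · intro i hi _
    simp only [List.length_drop, hl] at hi
    have := hc.getElem_add_getElem hl (j := m - 1 - i) (by omega)
    simp only [List.getElem_drop, List.getElem_reverse, List.getElem_map, List.getElem_take,
      List.length_map, List.length_take, hl, show min m (2 * m + 1) = m by omega]
    simp only [show m + 1 + i = 2 * m - (m - 1 - i) by omega]
    omega

theorem IsSelfCompl.mirrorExtend_take_eq (hc : IsSelfCompl l) (hs : IsScoreSeq l)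
    (hl : l.length = 2 * m + 1) : mirrorExtend m (l.take m) = l := by
  have hsplit : l = l.take m ++ l[m] :: ((l.take m).map (2 * m - ·)).reverse := by
    rw [← hc.drop_eq hl, ← List.drop_eq_getElem_cons, List.take_append_drop]
  have hhalf : ∀ x ∈ l.take m, x ≤ 2 * m := by
    intro x hx
    obtain ⟨j, hj, rfl⟩ := List.mem_iff_getElem.mp hx
    simp only [List.length_take, hl] at hj
    have := hc.getElem_add_getElem hl (j := j) (by omega)
    simp only [List.getElem_take]
    omega
  have hcompl := List.sum_map_sub_add_sum hhalf
  have hsum := hs.2.2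
  rw [hl, show 2 * m + 1 = m + 1 + m by omega, Nat.choose_two_add_one_add le_rfl, Nat.sub_self,
    Nat.choose_zero_succ] at hsum
  rw [hsplit, List.sum_append, List.sum_cons, List.sum_reverse] at hsum
  simp only [List.length_take, hl, show min m (2 * m + 1) = m by omega] at hcompl
  have hmid : l[m] = m := by omega
  calc mirrorExtend m (l.take m) = l.take m ++ l[m] :: ((l.take m).map (2 * m - ·)).reverse := by
        rw [hmid]; rfl
    _ = l := hsplit.symm

end IsSelfCompl

theorem setOf_isSelfCompl_eq_image_s4 {m : ℕ} (hm : 1 ≤ m) :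
    {l : List ℕ | l.length = 2 * m + 1 ∧ IsScoreSeq l ∧ IsSelfCompl l} =
      mirrorExtend m '' {h | IsHalfScoreSeq m h} := by
  ext l
  constructor
  · rintro ⟨hl, hs, hc⟩
    have hext := hc.mirrorExtend_take_eq hs hl
    exact ⟨l.take m, isHalfScoreSeq_of_isScoreSeq_mirrorExtend hm (by simp [hl]; omega)
      (by rwa [hext]), hext⟩
  · rintro ⟨h, hh, rfl⟩
    exact ⟨length_mirrorExtend hh.length_eq, hh.isScoreSeq_mirrorExtend,
      isSelfCompl_mirrorExtend hh.length_eq hh.le_two_mul⟩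

def FSet (n T E : ℕ) : Set (List ℕ) :=
  {l : List ℕ | l.length = n ∧ l.Pairwise (· ≤ ·) ∧
    (∀ r, 1 ≤ r → r < n → r.choose 2 ≤ (l.take r).sum) ∧
    l.sum = T ∧ l.getLast? = some E}

theorem finite_FSet (n T E : ℕ) : (FSet n T E).Finite :=
  (List.finite_setOf_length_eq_forall_le n T).subset fun _ ⟨hlen, _, _, hsum, _⟩ =>
    ⟨hlen, fun _ hx => hsum ▸ List.le_sum_of_mem hx⟩

theorem pairwiseDisjoint_FSet (n T : ℕ) (s : Set ℕ) : s.PairwiseDisjoint (FSet n T) :=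
  fun _ _ _ _ hne => Set.disjoint_left.mpr fun _ h₁ h₂ =>
    hne (Option.some_injective _ (h₁.2.2.2.2.symm.trans h₂.2.2.2.2))

theorem pairwiseDisjoint_biUnion_FSet (n : ℕ) (s : Set ℕ) (t : ℕ → Finset ℕ) :
    s.PairwiseDisjoint fun T => ⋃ E ∈ t T, FSet n T E := by
  intro T₁ _ T₂ _ hne
  refine Set.disjoint_left.mpr fun l h₁ h₂ => hne ?_
  simp only [Set.mem_iUnion] at h₁ h₂
  obtain ⟨_, _, _, _, _, hsum₁, _⟩ := h₁
  obtain ⟨_, _, _, _, _, hsum₂, _⟩ := h₂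
  exact hsum₁.symm.trans hsum₂

theorem setOf_isHalfScoreSeq_eq_biUnion {m : ℕ} (hm : 1 ≤ m) :
    {h | IsHalfScoreSeq m h} = ⋃ T ∈ Finset.Icc (m.choose 2) (m ^ 2),
      ⋃ E ∈ Finset.Icc ((T + m - 1) / m) m, FSet m T E := by
  ext h
  simp only [Set.mem_iUnion, Finset.mem_Icc, FSet, exists_prop]
  constructor
  · intro hh
    have hne : h ≠ [] := List.ne_nil_of_length_pos (by rw [hh.length_eq]; omega)
    obtain ⟨E, hE⟩ : ∃ E, h.getLast? = some E := ⟨_, List.getLast?_eq_some_getLast hne⟩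
    have hEm : E ≤ m := hh.le_of_mem E (List.mem_of_getLast? hE)
    have hsum : h.sum ≤ m * E := by
      simpa [hh.length_eq] using
        List.sum_le_card_nsmul h E (List.le_of_pairwise_of_getLast? hh.pairwise_le hE)
    refine ⟨h.sum, ⟨hh.choose_le_sum, ?_⟩, E, ⟨?_, hEm⟩, hh.length_eq, hh.pairwise_le,
      hh.choose_le_sum_take, rfl, hE⟩
    · exact hsum.trans (sq m ▸ Nat.mul_le_mul_left m hEm)
    · refine Nat.lt_succ_iff.mp ((Nat.div_lt_iff_lt_mul hm).mpr ?_)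
      rw [Nat.succ_mul, Nat.mul_comm E]
      omega
  · rintro ⟨T, ⟨hT, -⟩, E, ⟨-, hEm⟩, hlen, hsorted, hprefix, rfl, hE⟩
    exact ⟨hlen, hsorted, hprefix, hT,
      fun x hx => (List.le_of_pairwise_of_getLast? hsorted hE x hx).trans hEm⟩

/-- `SCS(2m+1) = ∑_{T=C(m,2)}^{m²} ∑_{E=⌈T/m⌉}^{m} F_m[T,E]` for `m ≥ 1`. -/
theorem SCS_odd (m : ℕ) (hm : 1 ≤ m) :
    SCS (2 * m + 1) =
      ∑ T ∈ Finset.Icc (m.choose 2) (m ^ 2),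
        ∑ E ∈ Finset.Icc ((T + m - 1) / m) m, F m T E := by
  rw [SCS, setOf_isSelfCompl_eq_image_s4 hm,
    Set.ncard_image_of_injective _ (mirrorExtend_injective m), setOf_isHalfScoreSeq_eq_biUnion hm,
    Set.ncard_biUnion_finset ?finite (pairwiseDisjoint_biUnion_FSet m _ _)]
  case finite => exact fun T _ => (Finset.finite_toSet _).biUnion fun E _ => finite_FSet m T E
  refine Finset.sum_congr rfl fun T _ => ?_
  exact Set.ncard_biUnion_finset (fun E _ => finite_FSet m T E) (pairwiseDisjoint_FSet m T _)
end

section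
/- For all nonnegative integers T and E: G_1[T,E] = 1 if T = E and G_1[T,E] = 0 otherwise; and for every n ≥ 2, G_n[T,E] = ∑_{k=⌈(T-E)/(n-1)⌉}^{E} G_{n-1}[T-E, k] if T - E > C(n-1,2), and G_n[T,E] = 0 otherwise. -/
/-!
Removing the last term `E` of a sequence counted by `G_n[T,E]` leaves a sequence counted by
`G_{n-1}[T-E,k]`, where `k ≤ E` is its new last term; the constraint for `r = n - 1`, which is
no longer a constraint on the shorter sequence, becomes `T - E > C(n-1,2)`. Conversely every
such shorter sequence extends by `E`. The lower limit `⌈(T-E)/(n-1)⌉` of the sum costs nothing,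
since a nondecreasing sequence of `n - 1` terms with last term `k` has sum at most `(n-1)k`.
-/

/-- `G n T E` is the number of nondecreasing sequences `(s_1 ≤ ⋯ ≤ s_n)` of nonnegative
integers with `∑_{i=1}^r s_i > C(r,2)` for all `1 ≤ r < n`, total sum `T`, and last term `E`. -/
noncomputable def G (n T E : ℕ) : ℕ :=
  {l : List ℕ | l.length = n ∧ l.Pairwise (· ≤ ·) ∧
    (∀ r, 1 ≤ r → r < n → r.choose 2 < (l.take r).sum) ∧
    l.sum = T ∧ l.getLast? = some E}.ncard

lemma List.finite_setOf_length_eq_forall_mem {α : Type*} {s : Set α} (hs : s.Finite) (n : ℕ) :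
    {l : List α | l.length = n ∧ ∀ x ∈ l, x ∈ s}.Finite := by
  have := hs.to_subtype
  refine ((List.finite_length_eq s n).image (List.map Subtype.val)).subset ?_
  rintro l ⟨hlen, hmem⟩
  lift l to List s using hmem
  exact ⟨l, by simpa using hlen, rfl⟩

lemma List.finite_setOf_length_eq_sum_eq (n T : ℕ) :
    {l : List ℕ | l.length = n ∧ l.sum = T}.Finite :=
  (List.finite_setOf_length_eq_forall_mem (Set.finite_Iic T) n).subset
    fun _ ⟨hlen, hsum⟩ => ⟨hlen, fun _ hx => hsum ▸ List.le_sum_of_mem hx⟩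

lemma List.Pairwise.le_of_getLast?_eq_some {α : Type*} [Preorder α] {l : List α} {k x : α}
    (hl : l.Pairwise (· ≤ ·)) (hk : l.getLast? = some k) (hx : x ∈ l) : x ≤ k := by
  obtain ⟨l', rfl⟩ := List.getLast?_eq_some_iff.mp hk
  rcases List.mem_append.mp hx with hx | hx
  · exact (List.pairwise_append.mp hl).2.2 x hx k (List.mem_singleton_self k)
  · exact (List.mem_singleton.mp hx).le

lemma List.Pairwise.sum_le_length_mul {l : List ℕ} {k : ℕ} (hl : l.Pairwise (· ≤ ·))
    (hk : l.getLast? = some k) : l.sum ≤ l.length * k :=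
  List.sum_le_card_nsmul l k fun _ => hl.le_of_getLast?_eq_some hk

lemma forall_choose_lt_sum_take_append_iff {l l' : List ℕ} {m : ℕ} (hm : 1 ≤ m)
    (hlen : l.length = m) :
    (∀ r, 1 ≤ r → r < m + 1 → r.choose 2 < ((l ++ l').take r).sum) ↔
      (∀ r, 1 ≤ r → r < m → r.choose 2 < (l.take r).sum) ∧ m.choose 2 < l.sum := by
  have htake : ∀ r ≤ m, (l ++ l').take r = l.take r := fun r hr =>
    List.take_append_of_le_length (hlen ▸ hr)
  constructor
  · intro h
    refine ⟨fun r hr1 hr => htake r hr.le ▸ h r hr1 (by omega), ?_⟩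
    simpa [htake m le_rfl, List.take_of_length_le hlen.le] using h m hm (by omega)
  · rintro ⟨h, hsum⟩ r hr1 hr
    rw [htake r (by omega)]
    rcases (Nat.lt_succ_iff.mp hr).lt_or_eq with hr | rfl
    · exact h r hr1 hr
    · rwa [List.take_of_length_le hlen.le]

def admissibleSeqs (n T E : ℕ) : Set (List ℕ) :=
  {l : List ℕ | l.length = n ∧ l.Pairwise (· ≤ ·) ∧
    (∀ r, 1 ≤ r → r < n → r.choose 2 < (l.take r).sum) ∧
    l.sum = T ∧ l.getLast? = some E}

lemma G_eq_ncard (n T E : ℕ) : G n T E = (admissibleSeqs n T E).ncard := rfl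

lemma finite_admissibleSeqs (n T E : ℕ) : (admissibleSeqs n T E).Finite :=
  (List.finite_setOf_length_eq_sum_eq n T).subset fun _ hl => ⟨hl.1, hl.2.2.2.1⟩

lemma pairwiseDisjoint_admissibleSeqs (n T : ℕ) (s : Set ℕ) :
    s.PairwiseDisjoint (admissibleSeqs n T) := fun _ _ _ _ hij =>
  Set.disjoint_left.mpr fun _ hi hj => hij (Option.some.inj (hi.2.2.2.2.symm.trans hj.2.2.2.2))

lemma admissibleSeqs_one (T E : ℕ) :
    admissibleSeqs 1 T E = {l | l = [E] ∧ T = E} := by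
  ext l
  constructor
  · rintro ⟨hlen, -, -, hsum, hlast⟩
    obtain ⟨a, rfl⟩ := List.length_eq_one_iff.mp hlen
    simp_all
  · rintro ⟨rfl, rfl⟩
    exact ⟨rfl, List.pairwise_singleton _ _, fun r hr1 hr => by omega, by simp, rfl⟩

theorem G_one (T E : ℕ) : G 1 T E = if T = E then 1 else 0 := by
  split_ifs with h <;> simp [G_eq_ncard, admissibleSeqs_one, h]

lemma exists_eq_append_of_mem_admissibleSeqs {n T E : ℕ} {l : List ℕ}
    (hl : l ∈ admissibleSeqs n T E) : ∃ l', l = l' ++ [E] :=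
  List.getLast?_eq_some_iff.mp hl.2.2.2.2

lemma append_mem_admissibleSeqs_succ_iff {m T E : ℕ} (hm : 1 ≤ m) {l : List ℕ} :
    l ++ [E] ∈ admissibleSeqs (m + 1) T E ↔
      m.choose 2 + E < T ∧ ∃ k ≤ E, l ∈ admissibleSeqs m (T - E) k := by
  simp only [admissibleSeqs, Set.mem_ofPred_eq, List.length_append, List.length_singleton,
    Nat.add_right_cancel_iff, List.pairwise_append, List.pairwise_singleton, List.mem_singleton,
    forall_eq, true_and, List.sum_append, List.sum_singleton, List.getLast?_concat, and_true]
  constructor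
  · rintro ⟨hlen, ⟨hsorted, hle⟩, hprefix, hsum⟩
    rw [forall_choose_lt_sum_take_append_iff hm hlen] at hprefix
    have hne : l ≠ [] := List.ne_nil_of_length_pos (by omega)
    exact ⟨by omega, l.getLast hne, hle _ (List.getLast_mem hne), hlen, hsorted, hprefix.1,
      by omega, List.getLast?_eq_some_getLast hne⟩
  · rintro ⟨hT, k, hkE, hlen, hsorted, hprefix, hsum, hk⟩
    rw [forall_choose_lt_sum_take_append_iff hm hlen]
    exact ⟨hlen, ⟨hsorted, fun x hx => (hsorted.le_of_getLast?_eq_some hk hx).trans hkE⟩,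
      ⟨hprefix, by omega⟩, by omega⟩

lemma admissibleSeqs_succ {m T E : ℕ} (hm : 1 ≤ m) (h : m.choose 2 + E < T) :
    admissibleSeqs (m + 1) T E =
      ⋃ k ∈ (Finset.Icc ((T - E + m - 1) / m) E : Set ℕ),
        (· ++ [E]) '' admissibleSeqs m (T - E) k := by
  ext l
  simp only [Set.mem_iUnion, Set.mem_image, Finset.coe_Icc, Set.mem_Icc, exists_prop]
  constructor
  · intro hl
    obtain ⟨l, rfl⟩ := exists_eq_append_of_mem_admissibleSeqs hl
    obtain ⟨-, k, hkE, hl⟩ := (append_mem_admissibleSeqs_succ_iff hm).mp hl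
    have hsum : T - E ≤ m * k := hl.2.2.2.1 ▸ hl.1 ▸ hl.2.1.sum_le_length_mul hl.2.2.2.2
    exact ⟨k, ⟨(Nat.div_le_iff_le_mul_add_pred hm).mpr (by omega), hkE⟩, l, hl, rfl⟩
  · rintro ⟨k, ⟨-, hkE⟩, l, hl, rfl⟩
    exact (append_mem_admissibleSeqs_succ_iff hm).mpr ⟨h, k, hkE, hl⟩

lemma admissibleSeqs_succ_eq_empty {m T E : ℕ} (hm : 1 ≤ m) (h : T ≤ m.choose 2 + E) :
    admissibleSeqs (m + 1) T E = ∅ := by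
  refine Set.eq_empty_of_forall_notMem fun l hl => ?_
  obtain ⟨l, rfl⟩ := exists_eq_append_of_mem_admissibleSeqs hl
  exact h.not_gt ((append_mem_admissibleSeqs_succ_iff hm).mp hl).1

theorem G_succ {m T E : ℕ} (hm : 1 ≤ m) (h : m.choose 2 + E < T) :
    G (m + 1) T E = ∑ k ∈ Finset.Icc ((T - E + m - 1) / m) E, G m (T - E) k := by
  rw [G_eq_ncard, admissibleSeqs_succ hm h, Set.Finite.ncard_biUnion (Finset.finite_toSet _)
    (fun k _ => (finite_admissibleSeqs m (T - E) k).image _), finsum_mem_coe_finset]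
  · exact Finset.sum_congr rfl fun k _ =>
      Set.ncard_image_of_injective _ (List.append_left_injective [E])
  · exact fun i hi j hj hij => (Set.disjoint_image_iff (List.append_left_injective [E])).mpr
      (pairwiseDisjoint_admissibleSeqs m (T - E) _ hi hj hij)

theorem G_succ_eq_zero {m T E : ℕ} (hm : 1 ≤ m) (h : T ≤ m.choose 2 + E) :
    G (m + 1) T E = 0 := by
  rw [G_eq_ncard, admissibleSeqs_succ_eq_empty hm h, Set.ncard_empty]

/-- The recurrence for the arrays `G_n[T,E]`. -/
theorem G_recurrence (T E : ℕ) :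
    (G 1 T E = if T = E then 1 else 0) ∧
    (∀ n : ℕ, 2 ≤ n →
      G n T E =
        if ((n - 1).choose 2 : ℤ) < (T : ℤ) - (E : ℤ) then
          ∑ k ∈ Finset.Icc ((T - E + (n - 1) - 1) / (n - 1)) E, G (n - 1) (T - E) k
        else 0) := by
  refine ⟨G_one T E, fun n hn => ?_⟩
  obtain ⟨m, rfl⟩ : ∃ m, n = m + 1 := ⟨n - 1, by omega⟩
  simp only [Nat.add_sub_cancel]
  split_ifs with h
  · exact G_succ (by omega) (by omega)
  · exact G_succ_eq_zero (by omega) (by omega)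
end

section
/- For every m ≥ 1, the number SSCS(2m) of distinct score sequences of length 2m that are both strong and self-complementary satisfies SSCS(2m) = ∑_{T=C(m,2)+1}^{m(m-1)} ∑_{E=⌈T/m⌉}^{m-1} G_m[T, E]. -/
/-- A strong score sequence of length `n`: nondecreasing, partial sums `> C(r,2)` for
`1 ≤ r < n`, and total sum `C(n,2)`. -/
def IsStrongScoreSeq (l : List ℕ) : Prop :=
  l.Pairwise (· ≤ ·) ∧
  (∀ r, 1 ≤ r → r < l.length → r.choose 2 < (l.take r).sum) ∧
  l.sum = l.length.choose 2

/-- `SSCS n` is the number of distinct score sequences of length `n` that are both strong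
and self-complementary. -/
noncomputable def SSCS (n : ℕ) : ℕ :=
  {l : List ℕ | l.length = n ∧ IsStrongScoreSeq l ∧ IsSelfCompl l}.ncard

namespace List

lemma sum_map_tsub_add_sum {l : List ℕ} {c : ℕ} (hl : ∀ x ∈ l, x ≤ c) :
    (l.map (c - ·)).sum + l.sum = l.length * c := by
  induction l with
  | nil => simp
  | cons a l ih =>
    rw [forall_mem_cons] at hl
    simp only [map_cons, sum_cons, length_cons, add_one_mul]
    have := ih hl.2
    omega

lemma finite_length_eq_forall_le (n B : ℕ) :
    {l : List ℕ | l.length = n ∧ ∀ x ∈ l, x ≤ B}.Finite := by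
  refine ((finite_length_eq (Set.Iic B) n).image (map Subtype.val)).subset ?_
  rintro l ⟨hn, hB⟩
  exact ⟨l.attach.map fun x => ⟨x.1, hB x.1 x.2⟩, by simp [hn], by simp⟩

end List

lemma Finset.set_ncard_biUnion {ι α : Type*} (s : Finset ι) {f : ι → Set α}
    (hf : ∀ i ∈ s, (f i).Finite) (hd : (s : Set ι).PairwiseDisjoint f) :
    (⋃ i ∈ s, f i).ncard = ∑ i ∈ s, (f i).ncard := by
  rw [← finsum_mem_coe_finset]
  exact s.finite_toSet.ncard_biUnion hf hd

lemma Nat.choose_two_add_add_mul {m j : ℕ} (hj : j ≤ m) :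
    (m + j).choose 2 + (m - j) * (2 * m - 1) = (m - j).choose 2 + m * (2 * m - 1) := by
  rcases Nat.eq_zero_or_pos m with rfl | hm
  · simp_all
  qify [hj, (by omega : 1 ≤ 2 * m)]
  rw [Nat.cast_choose_two, Nat.cast_choose_two]
  push_cast [hj]
  ring

def complExtend (c : ℕ) (h : List ℕ) : List ℕ :=
  h ++ h.reverse.map (c - ·)

section complExtend

variable {c : ℕ} {h : List ℕ}

@[simp]
lemma length_complExtend : (complExtend c h).length = 2 * h.length := by
  simp [complExtend, two_mul]

lemma take_complExtend_of_le {r : ℕ} (hr : r ≤ h.length) :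
    (complExtend c h).take r = h.take r :=
  List.take_append_of_le_length hr

lemma complExtend_injective (c : ℕ) : Function.Injective (complExtend c) := by
  intro a b hab
  have hlen : a.length = b.length := by simpa using congrArg List.length hab
  simpa [complExtend, hlen] using congrArg (List.take a.length) hab

lemma sum_take_complExtend_add (hc : ∀ x ∈ h, x ≤ c) (j : ℕ) :
    ((complExtend c h).take (h.length + j)).sum + (h.length - j) * c =
      h.length * c + (h.take (h.length - j)).sum := by
  have hall := List.sum_map_tsub_add_sum (l := h.reverse) (c := c) (by simpa using hc)
  have hdrop := List.sum_map_tsub_add_sum (l := (h.take (h.length - j)).reverse) (c := c)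
    (fun x hx => hc x (List.mem_of_mem_take (List.mem_reverse.mp hx)))
  rw [← List.sum_take_add_sum_drop _ j, ← List.map_drop, List.drop_reverse] at hall
  simp only [List.sum_reverse, List.length_reverse, List.length_take,
    min_eq_left (Nat.sub_le _ _)] at hall hdrop
  rw [complExtend, List.take_length_add_append, List.sum_append]
  omega

lemma pairwise_complExtend (hs : h.Pairwise (· ≤ ·))
    (hc : ∀ x ∈ h, ∀ y ∈ h, x + y ≤ c) :
    (complExtend c h).Pairwise (· ≤ ·) := by
  refine List.pairwise_append.2 ⟨hs, ?_, ?_⟩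
  · exact List.pairwise_map.2 <| List.pairwise_reverse.2 <|
      hs.imp fun hxy => Nat.sub_le_sub_left hxy c
  · simp only [List.mem_map, List.mem_reverse]
    rintro x hx _ ⟨y, hy, rfl⟩
    have := hc x hx y hy
    omega

lemma two_mul_le_of_pairwise_complExtend (hs : (complExtend c h).Pairwise (· ≤ ·)) {x : ℕ}
    (hx : x ∈ h) : 2 * x ≤ c := by
  have := (List.pairwise_append.1 hs).2.2 x hx (c - x) (by simpa using ⟨x, hx, rfl⟩)
  omega

lemma isSelfCompl_complExtend (hc : ∀ x ∈ h, x ≤ 2 * h.length - 1) :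
    IsSelfCompl (complExtend (2 * h.length - 1) h) := by
  intro i hi1 hi2
  simp only [length_complExtend, Nat.mul_div_cancel_left _ two_pos] at hi2 ⊢
  have hi : i - 1 < h.length := by omega
  have hb := hc _ (List.getElem_mem hi)
  have hj : 2 * h.length - i - h.length < (h.reverse.map (2 * h.length - 1 - ·)).length := by
    simp only [List.length_map, List.length_reverse]
    omega
  rw [complExtend, List.getD_append_right _ _ _ _ (by omega), List.getD_append _ _ _ _ hi,
    List.getD_eq_getElem _ _ hi, List.getD_eq_getElem _ _ hj]
  simp only [List.getElem_map, List.getElem_reverse,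
    show h.length - 1 - (2 * h.length - i - h.length) = i - 1 by omega]
  omega

end complExtend

lemma IsSelfCompl.complExtend_take {l : List ℕ} {m : ℕ} (hsc : IsSelfCompl l)
    (hl : l.length = 2 * m) : complExtend (2 * m - 1) (l.take m) = l := by
  conv_rhs => rw [← List.take_append_drop m l]
  have hlen : (l.take m).length = m := by simp only [List.length_take, hl]; omega
  refine congrArg (l.take m ++ ·) (List.ext_getElem ?_ fun j _ hj => ?_)
  · simp only [List.length_map, List.length_reverse, hlen, List.length_drop, hl]
    omega
  simp only [List.length_drop, hl] at hj
  have h := hsc (m - j) (by omega) (by omega)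
  simp only [hl, List.getD_eq_getElem?_getD, Option.getD_some,
    List.getElem?_eq_getElem (by omega : m - j - 1 < l.length),
    List.getElem?_eq_getElem (by omega : 2 * m - (m - j) < l.length)] at h
  simp only [List.getElem_drop, List.getElem_map, List.getElem_reverse, List.getElem_take,
    List.length_take, hl, show min m (2 * m) - 1 - j = m - j - 1 by omega,
    show m + j = 2 * m - (m - j) by omega]
  omega

def strongSeqs (n T E : ℕ) : Set (List ℕ) :=
  {l | l.length = n ∧ l.Pairwise (· ≤ ·) ∧
    (∀ r, 1 ≤ r → r < n → r.choose 2 < (l.take r).sum) ∧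
    l.sum = T ∧ l.getLast? = some E}

lemma finite_strongSeqs (n T E : ℕ) : (strongSeqs n T E).Finite :=
  (List.finite_length_eq_forall_le n T).subset fun _ ⟨hn, _, _, hT, _⟩ =>
    ⟨hn, fun _ hx => hT ▸ List.le_sum_of_mem hx⟩

lemma G_eq_ncard_strongSeqs (n T E : ℕ) : G n T E = (strongSeqs n T E).ncard := rfl

lemma pairwiseDisjoint_strongSeqs (n T : ℕ) (s : Set ℕ) : s.PairwiseDisjoint (strongSeqs n T) :=
  fun _ _ _ _ hne => Set.disjoint_left.2 fun _ hl hl' =>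
    hne (Option.some.inj (hl.2.2.2.2.symm.trans hl'.2.2.2.2))

lemma pairwiseDisjoint_biUnion_strongSeqs (n : ℕ) (s : Set ℕ) (t : ℕ → Finset ℕ) :
    s.PairwiseDisjoint fun T => ⋃ E ∈ t T, strongSeqs n T E :=
  (Set.pairwiseDisjoint_fiber List.sum s).mono fun _ =>
    Set.iUnion₂_subset fun _ _ _ hl => hl.2.2.2.1

def strongHalves (m : ℕ) : Set (List ℕ) :=
  {h | h.length = m ∧ h.Pairwise (· ≤ ·) ∧
    (∀ r, 1 ≤ r → r ≤ m → r.choose 2 < (h.take r).sum) ∧ ∀ x ∈ h, x ≤ m - 1}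

lemma isStrongScoreSeq_complExtend {m : ℕ} {h : List ℕ} (hh : h ∈ strongHalves m) :
    IsStrongScoreSeq (complExtend (2 * m - 1) h) := by
  obtain ⟨rfl, hs, hstr, hb⟩ := hh
  have key := sum_take_complExtend_add (c := 2 * h.length - 1) fun x hx =>
    (hb x hx).trans (by omega)
  refine ⟨pairwise_complExtend hs fun x hx y hy => ?_, fun r hr1 hr2 => ?_, ?_⟩
  · have := hb x hx; have := hb y hy; omega
  · rw [length_complExtend] at hr2
    rcases le_or_gt r h.length with hr | hr
    · rw [take_complExtend_of_le hr]
      exact hstr r hr1 hr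
    · obtain ⟨j, rfl⟩ : ∃ j, r = h.length + j := ⟨r - h.length, by omega⟩
      have := key j
      have := hstr (h.length - j) (by omega) (by omega)
      have := Nat.choose_two_add_add_mul (m := h.length) (j := j) (by omega)
      omega
  · have htot := key h.length
    have hch := Nat.choose_two_add_add_mul (le_refl h.length)
    rw [List.take_of_length_le (by simp [two_mul])] at htot
    simp only [Nat.sub_self, zero_mul, add_zero, List.take_zero, List.sum_nil,
      Nat.choose_zero_succ, zero_add] at htot hch
    rw [length_complExtend, htot, ← hch, two_mul]

lemma take_mem_strongHalves {m : ℕ} (hm : 1 ≤ m) {l : List ℕ} (hl : l.length = 2 * m)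
    (hs : IsStrongScoreSeq l) (hsc : IsSelfCompl l) : l.take m ∈ strongHalves m := by
  obtain ⟨hsort, hstr, -⟩ := hs
  refine ⟨by simp only [List.length_take, hl]; omega, hsort.sublist (List.take_sublist m l),
    fun r hr1 hr2 => ?_, fun x hx => ?_⟩
  · rw [List.take_take, min_eq_left hr2]
    exact hstr r hr1 (by omega)
  · rw [← hsc.complExtend_take hl] at hsort
    have := two_mul_le_of_pairwise_complExtend hsort hx
    omega

lemma strongSelfCompl_eq_image {m : ℕ} (hm : 1 ≤ m) :
    {l : List ℕ | l.length = 2 * m ∧ IsStrongScoreSeq l ∧ IsSelfCompl l} =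
      complExtend (2 * m - 1) '' strongHalves m := by
  ext l
  constructor
  · rintro ⟨hl, hs, hsc⟩
    exact ⟨l.take m, take_mem_strongHalves hm hl hs hsc, hsc.complExtend_take hl⟩
  · rintro ⟨h, hh, rfl⟩
    obtain rfl : h.length = m := hh.1
    have hsc := isSelfCompl_complExtend (h := h) fun x hx => (hh.2.2.2 x hx).trans (by omega)
    exact ⟨by simp, isStrongScoreSeq_complExtend hh, hsc⟩

lemma strongHalves_eq_biUnion {m : ℕ} (hm : 1 ≤ m) :
    strongHalves m = ⋃ T ∈ Finset.Icc (m.choose 2 + 1) (m * (m - 1)),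
      ⋃ E ∈ Finset.Icc ((T + m - 1) / m) (m - 1), strongSeqs m T E := by
  ext h
  simp only [strongHalves, strongSeqs, Set.mem_iUnion, Set.mem_ofPred_eq, Finset.mem_Icc,
    exists_prop]
  constructor
  · rintro ⟨hlen, hs, hstr, hb⟩
    have hne : h ≠ [] := by rintro rfl; simp at hlen; omega
    have hE : h.getLast hne ≤ m - 1 := hb _ (List.getLast_mem hne)
    have hT : h.sum ≤ m * h.getLast hne := by
      simpa [hlen] using List.sum_le_card_nsmul h _ fun x hx => hs.rel_getLast hx
    have hsum := hstr m hm le_rfl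
    rw [List.take_of_length_le hlen.le] at hsum
    refine ⟨h.sum, ⟨hsum, hT.trans (Nat.mul_le_mul_left m hE)⟩, h.getLast hne,
      ⟨(Nat.div_le_iff_le_mul_add_pred hm).2 (by omega), hE⟩, hlen, hs,
      fun r hr1 hr2 => hstr r hr1 hr2.le, rfl, List.getLast?_eq_some_getLast hne⟩
  · rintro ⟨T, ⟨hT, -⟩, E, ⟨-, hE⟩, hlen, hs, hstr, rfl, hlast⟩
    have hne : h ≠ [] := by rintro rfl; simp at hlen; omega
    have hlastE : h.getLast hne = E :=
      Option.some.inj ((List.getLast?_eq_some_getLast hne).symm.trans hlast)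
    refine ⟨hlen, hs, fun r hr1 hr2 => ?_,
      fun x hx => (hs.rel_getLast hx).trans (hlastE ▸ hE)⟩
    rcases hr2.lt_or_eq with hr2 | rfl
    · exact hstr r hr1 hr2
    · rw [List.take_of_length_le hlen.le]
      omega

/-- `SSCS(2m) = ∑_{T=C(m,2)+1}^{m(m-1)} ∑_{E=⌈T/m⌉}^{m-1} G_m[T,E]` for `m ≥ 1`. -/
theorem SSCS_even (m : ℕ) (hm : 1 ≤ m) :
    SSCS (2 * m) =
      ∑ T ∈ Finset.Icc (m.choose 2 + 1) (m * (m - 1)),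
        ∑ E ∈ Finset.Icc ((T + m - 1) / m) (m - 1), G m T E := by
  have hfin := finite_strongSeqs m
  simp only [G_eq_ncard_strongSeqs]
  rw [SSCS, strongSelfCompl_eq_image hm, Set.ncard_image_of_injective _ (complExtend_injective _),
    strongHalves_eq_biUnion hm,
    Finset.set_ncard_biUnion _ ?_ (pairwiseDisjoint_biUnion_strongSeqs m _ _)]
  · exact Finset.sum_congr rfl fun T _ =>
      Finset.set_ncard_biUnion _ (fun E _ => hfin T E) (pairwiseDisjoint_strongSeqs m T _)
  · exact fun T _ => (Finset.finite_toSet _).biUnion fun E _ => hfin T E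
end

section
/- For every n ≥ 1, SSCS(n) = SCS(n) - ∑_{i=1}^{⌊n/2⌋} SS(i)·SCS(n-2i), where the conventions SCS(0) = 1 and SCS(1) = 1 are used. -/
/-- `SS n` is the number of distinct strong score sequences of length `n`. -/
noncomputable def SS (n : ℕ) : ℕ :=
  {l : List ℕ | l.length = n ∧ IsStrongScoreSeq l}.ncard

theorem Nat.add_choose_two (a b : ℕ) : (a + b).choose 2 = a.choose 2 + b.choose 2 + a * b := by
  induction b with
  | zero => simp
  | succ b ih =>
    rw [← add_assoc, Nat.choose_succ_succ', Nat.choose_succ_succ', ih, Nat.choose_one_right,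
      Nat.choose_one_right]
    ring

theorem Nat.two_mul_choose_two (a : ℕ) : 2 * a.choose 2 = a * (a - 1) := by
  rw [Nat.choose_two_right, Nat.mul_div_cancel' (Nat.even_mul_pred_self a).two_dvd]

theorem Nat.choose_two_add_choose_two {n r : ℕ} (hr : r ≤ n) :
    n.choose 2 + r.choose 2 = (n - r).choose 2 + r * (n - 1) := by
  obtain ⟨s, rfl⟩ := Nat.exists_eq_add_of_le' hr
  rw [Nat.add_sub_cancel, Nat.add_choose_two]
  rcases r with _ | r
  · simp
  · have := Nat.two_mul_choose_two (r + 1)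
    rw [show s + (r + 1) - 1 = s + r by omega]
    simp only [Nat.add_sub_cancel] at this
    nlinarith

/-- The score sequence of the converse tournament: each score `x` becomes `n - 1 - x`, and the
list is reversed to keep it nondecreasing. -/
def complSeq (n : ℕ) (l : List ℕ) : List ℕ :=
  (l.map (n - 1 - ·)).reverse

section complSeq

variable {n : ℕ} {a b l : List ℕ}

@[simp]
theorem length_complSeq : (complSeq n l).length = l.length := by
  simp [complSeq]

theorem complSeq_append : complSeq n (a ++ b) = complSeq n b ++ complSeq n a := by
  simp [complSeq]

theorem getElem_complSeq {j : ℕ} (hj : j < (complSeq n l).length) :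
    (complSeq n l)[j] = n - 1 - l[l.length - 1 - j]'(by simp at hj; omega) := by
  simp [complSeq]

theorem complSeq_complSeq (hl : ∀ x ∈ l, x < n) : complSeq n (complSeq n l) = l := by
  rw [complSeq, complSeq, List.map_reverse, List.reverse_reverse, List.map_map]
  exact List.map_congr_left (fun x hx => by have := hl x hx; simp; omega) |>.trans l.map_id

theorem sum_complSeq_add_sum (hl : ∀ x ∈ l, x < n) :
    (complSeq n l).sum + l.sum = l.length * (n - 1) := by
  induction l with
  | nil => simp [complSeq]
  | cons x l ih =>
    have hx := hl x (by simp)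
    have := ih (fun y hy => hl y (by simp [hy]))
    simp only [complSeq, List.map_cons, List.reverse_cons, List.sum_append, List.sum_reverse,
      List.sum_cons, List.sum_nil, List.length_cons] at this ⊢
    rw [Nat.succ_mul]
    omega

theorem complSeq_add {j : ℕ} (hl : ∀ x ∈ l, x < n) :
    complSeq (n + j) l = (complSeq n l).map (· + j) := by
  simp only [complSeq, List.map_reverse, List.map_map]
  congr 1
  exact List.map_congr_left fun x hx => by have := hl x hx; simp; omega

theorem complSeq_map_add {i : ℕ} : complSeq (n + i) (l.map (· + i)) = complSeq n l := by
  simp only [complSeq, List.map_map]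
  congr 1
  exact List.map_congr_left fun x _ => by simp; omega

theorem take_complSeq (t : ℕ) : (complSeq n l).take t = complSeq n (l.drop (l.length - t)) := by
  simp [complSeq, List.take_reverse, List.map_drop]

theorem complSeq_append_append_complSeq (ha : ∀ x ∈ a, x < n) :
    complSeq n (a ++ b ++ complSeq n a) = a ++ complSeq n b ++ complSeq n a := by
  simp only [complSeq_append, complSeq_complSeq ha, List.append_assoc]

theorem take_append_drop_take_append_drop {t : ℕ} (ht : 2 * t ≤ l.length) :
    l.take t ++ (l.drop t).take (l.length - 2 * t) ++ l.drop (l.length - t) = l := by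
  rw [List.append_assoc, show l.length - t = t + (l.length - 2 * t) by omega, ← List.drop_drop,
    List.take_append_drop, List.take_append_drop]

theorem drop_eq_complSeq_take (hl : ∀ x ∈ l, x < l.length) (hfix : complSeq l.length l = l)
    (t : ℕ) : l.drop (l.length - t) = complSeq l.length (l.take t) := by
  have h := congrArg (List.take t) hfix
  rw [take_complSeq] at h
  rw [← h, complSeq_complSeq fun x hx => hl x (List.mem_of_mem_drop hx)]

end complSeq

section ScoreSeq

variable {i : ℕ} {l a b c m : List ℕ}

theorem isScoreSeq_iff : IsScoreSeq l ↔ l.Pairwise (· ≤ ·) ∧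
    (∀ r ≤ l.length, r.choose 2 ≤ (l.take r).sum) ∧ l.sum = l.length.choose 2 := by
  refine ⟨fun ⟨hs, hp, ht⟩ => ⟨hs, fun r hr => ?_, ht⟩,
    fun ⟨hs, hp, ht⟩ => ⟨hs, fun r _ hr => hp r hr.le, ht⟩⟩
  rcases hr.lt_or_eq with hr | rfl
  · rcases Nat.eq_zero_or_pos r with rfl | hr0
    · simp
    · exact hp r hr0 hr
  · rw [List.take_length, ht]

theorem IsScoreSeq.choose_two_le_sum_take (h : IsScoreSeq l) {r : ℕ} (hr : r ≤ l.length) :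
    r.choose 2 ≤ (l.take r).sum :=
  (isScoreSeq_iff.1 h).2.1 r hr

theorem IsStrongScoreSeq.isScoreSeq (h : IsStrongScoreSeq l) : IsScoreSeq l :=
  ⟨h.1, fun r h1 h2 => (h.2.1 r h1 h2).le, h.2.2⟩

theorem isStrongScoreSeq_iff : IsStrongScoreSeq l ↔
    IsScoreSeq l ∧ ∀ r, 1 ≤ r → r < l.length → (l.take r).sum ≠ r.choose 2 :=
  ⟨fun h => ⟨h.isScoreSeq, fun r h1 h2 => (h.2.1 r h1 h2).ne'⟩,
    fun ⟨h, hne⟩ =>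
      ⟨h.1, fun r h1 h2 => (h.2.1 r h1 h2).lt_of_ne (hne r h1 h2).symm, h.2.2⟩⟩

theorem IsScoreSeq.lt_length (h : IsScoreSeq l) {x : ℕ} (hx : x ∈ l) : x < l.length := by
  have hne : l ≠ [] := List.ne_nil_of_mem hx
  have hlast : x ≤ l.getLast hne := h.1.rel_getLast hx
  have hsum : l.dropLast.sum + l.getLast hne = l.sum := by
    conv_rhs => rw [← List.dropLast_append_getLast hne, List.sum_append, List.sum_singleton]
  have hpre : (l.length - 1).choose 2 ≤ l.dropLast.sum := by
    rw [List.dropLast_eq_take]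
    exact h.choose_two_le_sum_take (Nat.sub_le _ _)
  have hpos : 1 ≤ l.length := List.length_pos_iff.2 hne
  have hchoose := Nat.choose_two_add_choose_two hpos
  have := h.2.2
  rw [Nat.choose_eq_zero_of_lt one_lt_two, add_zero, one_mul] at hchoose
  omega

theorem IsScoreSeq.le_of_mem_drop (h : IsScoreSeq l) (hi : (l.take i).sum = i.choose 2)
    {x : ℕ} (hx : x ∈ l.drop i) : i ≤ x := by
  obtain ⟨p, hp, rfl⟩ := List.getElem_of_mem hx
  rw [List.length_drop] at hp
  have hsucc := List.sum_take_succ l i (by omega)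
  have hle := h.choose_two_le_sum_take (r := i + 1) (by omega)
  have hchoose := Nat.add_choose_two i 1
  simp only [mul_one, Nat.choose_succ_self, add_zero] at hchoose
  have hmono : l[i] ≤ l[i + p] := by
    rcases Nat.eq_zero_or_pos p with rfl | hp0
    · rfl
    · exact List.pairwise_iff_getElem.1 h.1 _ _ _ _ (by omega)
  rw [List.getElem_drop]
  omega

theorem IsScoreSeq.take (h : IsScoreSeq l) (hi : i ≤ l.length)
    (htight : (l.take i).sum = i.choose 2) : IsScoreSeq (l.take i) := by
  refine isScoreSeq_iff.2 ⟨h.1.sublist (List.take_sublist _ _), fun r hr => ?_, ?_⟩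
  · rw [List.length_take_of_le hi] at hr
    rw [List.take_take, min_eq_left hr]
    exact h.choose_two_le_sum_take (by omega)
  · rwa [List.length_take_of_le hi]

theorem sum_take_length_add_append_map_add (t : ℕ) :
    ((a ++ b.map (· + a.length)).take (a.length + t)).sum =
      a.sum + (b.take t).sum + (b.take t).length * a.length := by
  rw [List.take_length_add_append, List.sum_append, ← List.map_take]
  simp only [List.sum_map_add, List.map_const', List.sum_replicate, smul_eq_mul, List.map_id']
  ring

theorem isScoreSeq_append_map_add (ha : a.sum = a.length.choose 2) :
    IsScoreSeq (a ++ b.map (· + a.length)) ↔ IsScoreSeq a ∧ IsScoreSeq b := by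
  set i := a.length
  have hlen : (a ++ b.map (· + i)).length = i + b.length := by simp [i]
  have hprefix (t : ℕ) (ht : t ≤ b.length) : ((a ++ b.map (· + i)).take (i + t)).sum +
      t.choose 2 = (i + t).choose 2 + (b.take t).sum := by
    rw [sum_take_length_add_append_map_add, List.length_take_of_le ht, ha, Nat.add_choose_two]
    ring
  simp only [isScoreSeq_iff, List.pairwise_append, List.pairwise_map, hlen]
  constructor
  · rintro ⟨⟨hsa, hsb, -⟩, hpre, hsum⟩
    refine ⟨⟨hsa, fun r hr => ?_, ha⟩, ⟨hsb.imp (by omega), fun t ht => ?_, ?_⟩⟩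
    · simpa [List.take_append_of_le_length hr] using hpre r (by omega)
    · have := hprefix t ht
      have := hpre (i + t) (by omega)
      omega
    · have := hprefix b.length le_rfl
      rw [List.take_of_length_le (by rw [hlen]), List.take_length] at this
      omega
  · rintro ⟨⟨hsa, hpa, -⟩, ⟨hsb, hpb, hsumb⟩⟩
    have hlt : ∀ x ∈ a, x < i := fun x hx => (isScoreSeq_iff.2 ⟨hsa, hpa, ha⟩).lt_length hx
    refine ⟨⟨hsa, hsb.imp (by omega), fun x hx y hy => ?_⟩, fun r hr => ?_, ?_⟩
    · obtain ⟨z, -, rfl⟩ := List.mem_map.1 hy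
      have := hlt x hx
      omega
    · rcases le_or_gt r i with hri | hri
      · simpa [List.take_append_of_le_length hri] using hpa r hri
      · obtain ⟨t, rfl⟩ := Nat.exists_eq_add_of_le hri.le
        have := hprefix t (by omega)
        have := hpb t (by omega)
        omega
    · have := hprefix b.length le_rfl
      rw [List.take_of_length_le (by rw [hlen]), List.take_length] at this
      omega

theorem IsScoreSeq.isScoreSeq_append_map_add_iff (ha : IsScoreSeq a) :
    IsScoreSeq (a ++ m.map (· + a.length)) ↔ IsScoreSeq m := by
  rw [isScoreSeq_append_map_add ha.2.2, and_iff_right ha]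

theorem IsScoreSeq.isScoreSeq_append_map_add_iff_left (hc : IsScoreSeq c) :
    IsScoreSeq (m ++ c.map (· + m.length)) ↔ IsScoreSeq m := by
  refine ⟨fun h => ?_, fun hm => (isScoreSeq_append_map_add hm.2.2).2 ⟨hm, hc⟩⟩
  have hm : m.sum = m.length.choose 2 := by
    have htotal := h.2.2
    simp only [List.sum_append, List.sum_map_add, List.map_const', List.sum_replicate,
      List.length_append, List.length_map, smul_eq_mul, List.map_id', hc.2.2,
      Nat.add_choose_two] at htotal
    linarith
  exact ((isScoreSeq_append_map_add hm).1 h).1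

theorem sum_take_complSeq_add_sum (hl : ∀ x ∈ l, x < l.length) {r : ℕ} (hr : r ≤ l.length) :
    ((complSeq l.length l).take r).sum + l.sum =
      (l.take (l.length - r)).sum + r * (l.length - 1) := by
  rw [take_complSeq]
  have hc := sum_complSeq_add_sum (n := l.length) (l := l.drop (l.length - r))
    fun x hx => hl x (List.mem_of_mem_drop hx)
  have hs := List.sum_take_add_sum_drop l (l.length - r)
  rw [List.length_drop, show l.length - (l.length - r) = r by omega] at hc
  omega

theorem isScoreSeq_complSeq (h : IsScoreSeq l) : IsScoreSeq (complSeq l.length l) := by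
  have hlt : ∀ x ∈ l, x < l.length := fun x hx => h.lt_length hx
  refine isScoreSeq_iff.2 ⟨?_, fun r hr => ?_, ?_⟩
  · rw [complSeq, List.pairwise_reverse, List.pairwise_map]
    exact h.1.imp (by omega)
  · rw [length_complSeq] at hr
    have := sum_take_complSeq_add_sum hlt hr
    have := h.choose_two_le_sum_take (r := l.length - r) (by omega)
    have := Nat.choose_two_add_choose_two hr
    have := h.2.2
    omega
  · have := sum_complSeq_add_sum hlt
    have := Nat.choose_two_add_choose_two (le_refl l.length)
    rw [Nat.sub_self, Nat.choose_zero_succ] at this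
    have := h.2.2
    rw [length_complSeq]
    omega

end ScoreSeq

section SelfCompl

variable {i j : ℕ} {l : List ℕ}

theorem IsSelfCompl.drop_eq_complSeq_take (hsc : IsSelfCompl l) (hl : ∀ x ∈ l, x < l.length) :
    l.drop (l.length - l.length / 2) = complSeq l.length (l.take (l.length / 2)) := by
  apply List.ext_getElem (by simp; omega)
  intro j hj _
  simp only [List.length_drop] at hj
  have h := hsc (l.length / 2 - j) (by omega) (by omega)
  rw [List.getD_eq_getElem _ _ (by omega), List.getD_eq_getElem _ _ (by omega)] at h
  have hbound : l[l.length / 2 - j - 1] < l.length := hl _ (List.getElem_mem _)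
  simp only [List.getElem_drop, getElem_complSeq, List.getElem_take, List.length_take]
  simp only [show l.length - l.length / 2 + j = l.length - (l.length / 2 - j) by omega,
    show min (l.length / 2) l.length - 1 - j = l.length / 2 - j - 1 by omega]
  omega

theorem isSelfCompl_of_complSeq_eq (hl : ∀ x ∈ l, x < l.length)
    (hfix : complSeq l.length l = l) : IsSelfCompl l := by
  intro i hi1 hi2
  have h : l[l.length - i]'(by omega) = (complSeq l.length l)[l.length - i]'(by simp; omega) := by
    simp only [hfix]
  rw [getElem_complSeq] at h
  have hbound : l[i - 1] < l.length := hl _ (List.getElem_mem _)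
  simp only [show l.length - 1 - (l.length - i) = i - 1 by omega] at h
  rw [List.getD_eq_getElem _ _ (by omega), List.getD_eq_getElem _ _ (by omega), h]
  omega

theorem IsScoreSeq.complSeq_eq_of_isSelfCompl (h : IsScoreSeq l) (hsc : IsSelfCompl l) :
    complSeq l.length l = l := by
  set n := l.length with hn
  have hlt : ∀ x ∈ l, x < n := fun x hx => h.lt_length hx
  set a := l.take (n / 2)
  set M := (l.drop (n / 2)).take (n - 2 * (n / 2))
  have hsplit : l = a ++ M ++ complSeq n a := by
    rw [← hsc.drop_eq_complSeq_take hlt]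
    exact (take_append_drop_take_append_drop (by omega)).symm
  have ha : ∀ x ∈ a, x < n := fun x hx => hlt x (List.mem_of_mem_take hx)
  suffices hM : complSeq n M = M by
    conv_rhs => rw [hsplit]
    conv_lhs => rw [hsplit, complSeq_append_append_complSeq ha, hM]
  have hMlen : M.length = n - 2 * (n / 2) := by simp [M]; omega
  obtain hM0 | hM1 : M.length = 0 ∨ M.length = 1 := by omega
  · simp [List.length_eq_zero_iff.1 hM0, complSeq]
  -- for odd `n` the middle entry is forced to be `(n - 1) / 2` by the total sum
  obtain ⟨x, hx⟩ := List.length_eq_one_iff.1 hM1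
  have hsum := congrArg List.sum hsplit
  rw [hx, List.sum_append, List.sum_append, List.sum_singleton, h.2.2] at hsum
  have hc := sum_complSeq_add_sum ha
  have htwo := Nat.two_mul_choose_two n
  rw [List.length_take_of_le (by omega)] at hc
  obtain ⟨k, hk⟩ : ∃ k, n = 2 * k + 1 := ⟨n / 2, by omega⟩
  rw [hk, show (2 * k + 1) / 2 = k by omega] at hc
  rw [← hn, hk] at hsum
  rw [hk] at htwo
  simp only [Nat.add_sub_cancel] at hc htwo
  have hxk : x = k := by nlinarith
  rw [hx, hk]
  simp only [complSeq, List.map_cons, List.map_nil, List.reverse_singleton, List.cons.injEq,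
    and_true]
  omega

theorem IsScoreSeq.isSelfCompl_iff (h : IsScoreSeq l) :
    IsSelfCompl l ↔ complSeq l.length l = l :=
  ⟨h.complSeq_eq_of_isSelfCompl, isSelfCompl_of_complSeq_eq fun _ hx => h.lt_length hx⟩

theorem IsScoreSeq.sum_take_sub_length (h : IsScoreSeq l) (hfix : complSeq l.length l = l)
    (hi : i ≤ l.length) (htight : (l.take i).sum = i.choose 2) :
    (l.take (l.length - i)).sum = (l.length - i).choose 2 := by
  have hsum := sum_take_complSeq_add_sum (fun x hx => h.lt_length hx) hi
  rw [hfix, htight, h.2.2] at hsum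
  have := Nat.choose_two_add_choose_two hi
  omega

theorem IsScoreSeq.not_isStrongScoreSeq_iff (hsc : IsScoreSeq l) (hself : IsSelfCompl l) :
    ¬ IsStrongScoreSeq l ↔
      ∃ i, 1 ≤ i ∧ 2 * i ≤ l.length ∧ IsStrongScoreSeq (l.take i) := by
  classical
  constructor
  · intro hns
    have hex : ∃ r, 1 ≤ r ∧ r < l.length ∧ (l.take r).sum = r.choose 2 := by
      by_contra! hno
      exact hns (isStrongScoreSeq_iff.2 ⟨hsc, hno⟩)
    obtain ⟨hi1, hin, htight⟩ := Nat.find_spec hex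
    have hmin (r : ℕ) (hr : r < Nat.find hex) :
        ¬ (1 ≤ r ∧ r < l.length ∧ (l.take r).sum = r.choose 2) :=
      Nat.find_min hex hr
    refine ⟨Nat.find hex, hi1, ?_,
      isStrongScoreSeq_iff.2 ⟨hsc.take hin.le htight, fun r hr1 hr2 htr => ?_⟩⟩
    · by_contra! h
      exact hmin (l.length - Nat.find hex) (by omega) ⟨by omega, by omega,
        hsc.sum_take_sub_length (hsc.isSelfCompl_iff.1 hself) hin.le htight⟩
    · rw [List.length_take_of_le hin.le] at hr2
      rw [List.take_take, min_eq_left hr2.le] at htr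
      exact hmin r hr2 ⟨hr1, by omega, htr⟩
  · rintro ⟨i, hi1, h2i, hstrong⟩ hs
    have htight := hstrong.2.2
    rw [List.length_take_of_le (by omega)] at htight
    exact (isStrongScoreSeq_iff.1 hs).2 i hi1 (by omega) htight

theorem IsStrongScoreSeq.not_isStrongScoreSeq_take (hj : IsStrongScoreSeq (l.take j))
    (hi1 : 1 ≤ i) (hij : i < j) (hjl : j ≤ l.length) : ¬ IsStrongScoreSeq (l.take i) := by
  intro hi
  have htight := hi.2.2
  rw [List.length_take_of_le (by omega)] at htight
  refine hj.2.1 i hi1 (by simp; omega) |>.ne' ?_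
  rwa [List.take_take, min_eq_left hij.le]

end SelfCompl

def glue (n i : ℕ) (p : List ℕ × List ℕ) : List ℕ :=
  p.1 ++ p.2.map (· + i) ++ complSeq n p.1

section Glue

variable {n i : ℕ} {a m : List ℕ}

theorem length_glue (ha : a.length = i) (hn : n = 2 * i + m.length) :
    (glue n i (a, m)).length = n := by
  simp [glue, ha, hn]; omega

theorem take_glue (ha : a.length = i) : (glue n i (a, m)).take i = a := by
  rw [glue, List.append_assoc, List.take_left' ha]

theorem glue_inj {a' m' : List ℕ} (ha : a.length = i) (ha' : a'.length = i) :
    glue n i (a, m) = glue n i (a', m') ↔ a = a' ∧ m = m' := by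
  refine ⟨fun h => ?_, fun ⟨rfl, rfl⟩ => rfl⟩
  rw [glue, glue, List.append_assoc, List.append_assoc] at h
  obtain ⟨rfl, h⟩ := List.append_inj h (ha.trans ha'.symm)
  exact ⟨rfl, List.map_injective_iff.2 (add_left_injective i) (List.append_cancel_right h)⟩

theorem IsScoreSeq.isScoreSeq_glue_iff (ha : IsScoreSeq a) (hai : a.length = i)
    (hn : n = 2 * i + m.length) : IsScoreSeq (glue n i (a, m)) ↔ IsScoreSeq m := by
  subst hai hn
  have hsplit : glue (2 * a.length + m.length) a.length (a, m) =
      a ++ (m ++ (complSeq a.length a).map (· + m.length)).map (· + a.length) := by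
    rw [glue, show 2 * a.length + m.length = a.length + (m.length + a.length) by ring,
      complSeq_add fun x hx => ha.lt_length hx]
    simp only [List.map_append, List.map_map, List.append_assoc]
    congr 3
    ext x; simp only [Function.comp_apply]; ring
  rw [hsplit, ha.isScoreSeq_append_map_add_iff,
    (isScoreSeq_complSeq ha).isScoreSeq_append_map_add_iff_left]

theorem complSeq_glue (ha : ∀ x ∈ a, x < n) (hm : ∀ x ∈ m, x < m.length)
    (hn : n = 2 * i + m.length) :
    complSeq n (glue n i (a, m)) = glue n i (a, complSeq m.length m) := by
  rw [glue, complSeq_append_append_complSeq ha, glue, hn,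
    show 2 * i + m.length = m.length + i + i by ring, complSeq_map_add, complSeq_add hm]

theorem IsScoreSeq.isSelfCompl_glue_iff (ha : IsScoreSeq a) (hai : a.length = i)
    (hn : n = 2 * i + m.length) (hm : IsScoreSeq m) :
    IsSelfCompl (glue n i (a, m)) ↔ IsSelfCompl m := by
  have hglue := (ha.isScoreSeq_glue_iff hai hn).2 hm
  have hlt : ∀ x ∈ a, x < n := fun x hx => by have := ha.lt_length hx; omega
  rw [hglue.isSelfCompl_iff, hm.isSelfCompl_iff, length_glue hai hn,
    complSeq_glue hlt (fun x hx => hm.lt_length hx) hn, glue_inj hai hai]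
  simp

end Glue

def strongScoreSeqs (n : ℕ) : Set (List ℕ) :=
  {l | l.length = n ∧ IsStrongScoreSeq l}

def selfComplScoreSeqs (n : ℕ) : Set (List ℕ) :=
  {l | l.length = n ∧ IsScoreSeq l ∧ IsSelfCompl l}

def strongSelfComplScoreSeqs (n : ℕ) : Set (List ℕ) :=
  {l | l.length = n ∧ IsStrongScoreSeq l ∧ IsSelfCompl l}

section Counting

variable {n i : ℕ} {l : List ℕ}

theorem finite_setOf_isScoreSeq (n : ℕ) :
    {l : List ℕ | l.length = n ∧ IsScoreSeq l}.Finite := by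
  refine ((List.finite_length_eq (Fin n) n).image (List.map Fin.val)).subset ?_
  rintro l ⟨hl, hsc⟩
  lift l to List (Fin n) using fun x hx => hl ▸ hsc.lt_length hx
  exact ⟨l, by simpa using hl, rfl⟩

theorem finite_strongScoreSeqs (n : ℕ) : (strongScoreSeqs n).Finite :=
  (finite_setOf_isScoreSeq n).subset fun _ ⟨hl, h⟩ => ⟨hl, h.isScoreSeq⟩

theorem finite_selfComplScoreSeqs (n : ℕ) : (selfComplScoreSeqs n).Finite :=
  (finite_setOf_isScoreSeq n).subset fun _ ⟨hl, h, _⟩ => ⟨hl, h⟩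

theorem mem_image_glue_iff (h2i : 2 * i ≤ n) :
    l ∈ glue n i '' (strongScoreSeqs i ×ˢ selfComplScoreSeqs (n - 2 * i)) ↔
      l ∈ selfComplScoreSeqs n ∧ IsStrongScoreSeq (l.take i) := by
  constructor
  · rintro ⟨⟨a, m⟩, hmem, rfl⟩
    obtain ⟨⟨hai, ha⟩, hmk, hm, hmc⟩ := hmem
    dsimp only at hai ha hmk hm hmc
    have hn : n = 2 * i + m.length := by omega
    exact ⟨⟨length_glue hai hn, (ha.isScoreSeq.isScoreSeq_glue_iff hai hn).2 hm,
      (ha.isScoreSeq.isSelfCompl_glue_iff hai hn hm).2 hmc⟩, by rwa [take_glue hai]⟩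
  · rintro ⟨⟨rfl, hsc, hself⟩, ha⟩
    set a := l.take i
    set m := ((l.drop i).take (l.length - 2 * i)).map (· - i)
    have hai : a.length = i := List.length_take_of_le (by omega)
    have hn : l.length = 2 * i + m.length := by simp [m]; omega
    have htight : a.sum = i.choose 2 := hai ▸ ha.2.2
    have hmid : m.map (· + i) = (l.drop i).take (l.length - 2 * i) := by
      rw [List.map_map]
      refine (List.map_congr_left fun x hx => ?_).trans (List.map_id _)
      have := hsc.le_of_mem_drop htight (List.mem_of_mem_take hx)
      simp only [Function.comp_apply, id]
      omega
    have hglue : glue l.length i (a, m) = l := by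
      dsimp only [glue]
      rw [hmid, ← drop_eq_complSeq_take (fun x hx => hsc.lt_length hx)
        (hsc.isSelfCompl_iff.1 hself)]
      exact take_append_drop_take_append_drop h2i
    rw [← hglue] at hsc hself
    have hm := (ha.isScoreSeq.isScoreSeq_glue_iff hai hn).1 hsc
    exact ⟨(a, m), ⟨⟨hai, ha⟩, ⟨by dsimp only; omega, hm,
      (ha.isScoreSeq.isSelfCompl_glue_iff hai hn hm).1 hself⟩⟩, hglue⟩

theorem selfComplScoreSeqs_diff_eq_biUnion :
    selfComplScoreSeqs n \ strongSelfComplScoreSeqs n = ⋃ i ∈ (Finset.Icc 1 (n / 2) : Set ℕ),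
      glue n i '' (strongScoreSeqs i ×ˢ selfComplScoreSeqs (n - 2 * i)) := by
  ext l
  simp only [Set.mem_sdiff, Set.mem_iUnion, Finset.coe_Icc, Set.mem_Icc, exists_prop]
  constructor
  · rintro ⟨⟨hl, hsc, hself⟩, hnot⟩
    obtain ⟨i, hi1, h2i, hstrong⟩ :=
      (hsc.not_isStrongScoreSeq_iff hself).1 fun hs => hnot ⟨hl, hs, hself⟩
    exact ⟨i, ⟨hi1, by omega⟩,
      (mem_image_glue_iff (by omega)).2 ⟨⟨hl, hsc, hself⟩, hstrong⟩⟩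
  · rintro ⟨i, ⟨hi1, hin⟩, hmem⟩
    obtain ⟨⟨hl, hsc, hself⟩, hstrong⟩ := (mem_image_glue_iff (by omega)).1 hmem
    exact ⟨⟨hl, hsc, hself⟩, fun ⟨_, hs, _⟩ =>
      (hsc.not_isStrongScoreSeq_iff hself).2 ⟨i, hi1, by omega, hstrong⟩ hs⟩

theorem ncard_image_glue :
    (glue n i '' (strongScoreSeqs i ×ˢ selfComplScoreSeqs (n - 2 * i))).ncard =
      SS i * SCS (n - 2 * i) := by
  rw [Set.InjOn.ncard_image, Set.ncard_prod]
  · rfl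
  rintro ⟨a, m⟩ ⟨⟨ha, -⟩, -⟩ ⟨a', m'⟩ ⟨⟨ha', -⟩, -⟩ h
  simpa [glue_inj ha ha'] using h

theorem ncard_selfComplScoreSeqs_diff :
    (selfComplScoreSeqs n \ strongSelfComplScoreSeqs n).ncard =
      ∑ i ∈ Finset.Icc 1 (n / 2), SS i * SCS (n - 2 * i) := by
  rw [selfComplScoreSeqs_diff_eq_biUnion, (Finset.finite_toSet _).ncard_biUnion,
    finsum_mem_coe_finset]
  · exact Finset.sum_congr rfl fun _ _ => ncard_image_glue
  · exact fun i _ => ((finite_strongScoreSeqs i).prod (finite_selfComplScoreSeqs _)).image _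
  · intro i hi j hj hij
    simp only [Finset.coe_Icc, Set.mem_Icc] at hi hj
    refine Set.disjoint_left.2 fun l hli hlj => ?_
    obtain ⟨⟨hl, -⟩, hsi⟩ := (mem_image_glue_iff (by omega)).1 hli
    obtain ⟨-, hsj⟩ := (mem_image_glue_iff (by omega)).1 hlj
    rcases Nat.lt_or_gt_of_ne hij with hij | hij
    · exact hsj.not_isStrongScoreSeq_take hi.1 hij (by omega) hsi
    · exact hsi.not_isStrongScoreSeq_take hj.1 hij (by omega) hsj

end Counting

theorem SSCS_recurrence_general (n : ℕ) :
    (SSCS n : ℤ) =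
      (SCS n : ℤ) - ∑ i ∈ Finset.Icc 1 (n / 2), (SS i : ℤ) * (SCS (n - 2 * i) : ℤ) := by
  have hsub : strongSelfComplScoreSeqs n ⊆ selfComplScoreSeqs n :=
    fun _ ⟨hl, hs, hself⟩ => ⟨hl, hs.isScoreSeq, hself⟩
  have hcount : SCS n = SSCS n + ∑ i ∈ Finset.Icc 1 (n / 2), SS i * SCS (n - 2 * i) := by
    rw [← ncard_selfComplScoreSeqs_diff, add_comm]
    exact (Set.ncard_sdiff_add_ncard_of_subset hsub (finite_selfComplScoreSeqs n)).symm
  rw [hcount]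
  push_cast
  ring

/-- `SSCS(n) = SCS(n) - ∑_{i=1}^{⌊n/2⌋} SS(i)·SCS(n-2i)` for `n ≥ 1`. -/
theorem SSCS_recurrence (n : ℕ) (hn : 1 ≤ n) :
    (SSCS n : ℤ) =
      (SCS n : ℤ) - ∑ i ∈ Finset.Icc 1 (n / 2), (SS i : ℤ) * (SCS (n - 2 * i) : ℤ) :=
  SSCS_recurrence_general n
end
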